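/- arXiv:2306.04382 — 7 statements merged into one kernel-verified Lean document; each statement's English description precedes it below -/
import Mathlib

section
/- Let T be a standard Young tableau of skew shape λ/μ and let κ_i be a Knuth transformation on SYTs applicable at index i (i.e. i is a peak or valley of T). Then the resulting filling κ_i(T) is again a standard Young tableau of shape λ/μ; in particular, the two swapped consecutive entries never lie in the same row or the same column of T. -/
/-- `lam/mu` is a skew shape: `lam` and `mu` are partitions (1-indexed, weakly decreasing,
with finitely many nonzero parts) with `mu ⊆ lam`. -/
def IsSkewShape (lam mu : ℕ → ℕ) : Prop :=
  (∀ i, 1 ≤ i → lam (i+1) ≤ lam i) ∧ (∀ i, 1 ≤ i → mu (i+1) ≤ mu i) ∧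
  (∀ i, mu i ≤ lam i) ∧ (∃ N, ∀ i, N ≤ i → lam i = 0)

/-- A standard Young tableau of skew shape `lam/mu` with `n` entries, recorded by the
(1-indexed) row and column of each entry `1, …, n`.  Rows are numbered from top to
bottom, columns from left to right; the cells of `lam/mu` in row `r` are the columns `c`
with `mu r < c ≤ lam r`.  Entries increase along rows and columns.  The functions `row`
and `col` are normalized to `0` outside `{1, …, n}`. -/
structure SkewSYT (lam mu : ℕ → ℕ) (n : ℕ) where
  row : ℕ → ℕ
  col : ℕ → ℕ
  row_pos : ∀ k, 1 ≤ k → k ≤ n → 1 ≤ row k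
  mem_cell : ∀ k, 1 ≤ k → k ≤ n → mu (row k) < col k ∧ col k ≤ lam (row k)
  inj' : ∀ k l, 1 ≤ k → k ≤ n → 1 ≤ l → l ≤ n → row k = row l → col k = col l → k = l
  surj' : ∀ r c, 1 ≤ r → mu r < c → c ≤ lam r → ∃ k, 1 ≤ k ∧ k ≤ n ∧ row k = r ∧ col k = c
  row_inc : ∀ k l, 1 ≤ k → k < l → l ≤ n → row k = row l → col k < col l
  col_inc : ∀ k l, 1 ≤ k → k < l → l ≤ n → col k = col l → row k < row l
  row_out : ∀ k, ¬(1 ≤ k ∧ k ≤ n) → row k = 0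
  col_out : ∀ k, ¬(1 ≤ k ∧ k ≤ n) → col k = 0

/-- The peak set of a standard Young tableau: `i` (with `2 ≤ i ≤ n-1`) is a peak when
`i-1` is an ascent (`i` is not in a lower row than `i-1`) and `i` is a descent
(`i+1` is in a strictly lower row than `i`). -/
def SkewSYT.peakSet {lam mu : ℕ → ℕ} {n : ℕ} (T : SkewSYT lam mu n) : Set ℕ :=
  {i | 2 ≤ i ∧ i + 1 ≤ n ∧ T.row i ≤ T.row (i-1) ∧ T.row i < T.row (i+1)}

/-- The valley set of a standard Young tableau: `i-1` is a descent and `i` is an ascent. -/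
def SkewSYT.valleySet {lam mu : ℕ → ℕ} {n : ℕ} (T : SkewSYT lam mu n) : Set ℕ :=
  {i | 2 ≤ i ∧ i + 1 ≤ n ∧ T.row (i-1) < T.row i ∧ T.row (i+1) ≤ T.row i}

/-- Swap the values of `f` at positions `a` and `b`. -/
def swapFun (f : ℕ → ℕ) (a b : ℕ) : ℕ → ℕ :=
  fun k => if k = a then f b else if k = b then f a else f k

/-- The condition (in terms of the row word of the tableau) under which the Knuth
transformation `κ_i` on SYTs swaps the entries `i-1` and `i` (cases (i) and (iii)):
either `i` is a valley and `i+1` lies in a lower row than `i-1`, or `i` is a peak and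
`i+1` does not lie in a lower row than `i-1`.  In the remaining cases (ii) and (iv)
(`i` a valley with `i+1` not lower than `i-1`, or `i` a peak with `i+1` lower than `i-1`)
the entries `i` and `i+1` are swapped. -/
def swapLowCond (row : ℕ → ℕ) (i : ℕ) : Prop :=
  (row (i-1) < row i ∧ row (i+1) ≤ row i ∧ row (i-1) < row (i+1)) ∨
  (row i ≤ row (i-1) ∧ row i < row (i+1) ∧ row (i+1) ≤ row (i-1))

open scoped Classical in
/-- The effect of the Knuth transformation `κ_i` on a position function `f` (either the
row function or the column function of the tableau), the case distinction being made
through the row function `row`. -/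
noncomputable def kSwap (row : ℕ → ℕ) (i : ℕ) (f : ℕ → ℕ) : ℕ → ℕ :=
  if swapLowCond row i then swapFun f (i-1) i else swapFun f i (i+1)

/-- The row function of `κ_i T`. -/
noncomputable def kRow {lam mu : ℕ → ℕ} {n : ℕ} (T : SkewSYT lam mu n) (i : ℕ) : ℕ → ℕ :=
  kSwap T.row i T.row

/-- The column function of `κ_i T`. -/
noncomputable def kCol {lam mu : ℕ → ℕ} {n : ℕ} (T : SkewSYT lam mu n) (i : ℕ) : ℕ → ℕ :=
  kSwap T.row i T.col

section Stmt4Aux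

variable {lam mu : ℕ → ℕ} {n : ℕ}

private lemma anti_of {f : ℕ → ℕ} (hf : ∀ i, 1 ≤ i → f (i+1) ≤ f i) :
    ∀ {r s : ℕ}, 1 ≤ r → r ≤ s → f s ≤ f r := by
  intro r s h1 h2
  induction s with
  | zero => omega
  | succ m ih =>
    rcases Nat.lt_or_ge r (m+1) with hlt | hge
    · exact le_trans (hf m (by omega)) (ih (by omega))
    · have : r = m + 1 := by omega
      rw [this]

private lemma lt_of_same_row (T : SkewSYT lam mu n) {k l : ℕ}
    (hk1 : 1 ≤ k) (hkn : k ≤ n) (hl1 : 1 ≤ l) (hln : l ≤ n)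
    (hr : T.row k = T.row l) (hc : T.col k < T.col l) : k < l := by
  rcases Nat.lt_trichotomy k l with h | h | h
  · exact h
  · subst h; omega
  · exact absurd (T.row_inc l k hl1 h hkn hr.symm) (by omega)

private lemma lt_of_same_col (T : SkewSYT lam mu n) {k l : ℕ}
    (hk1 : 1 ≤ k) (hkn : k ≤ n) (hl1 : 1 ≤ l) (hln : l ≤ n)
    (hc : T.col k = T.col l) (hr : T.row k < T.row l) : k < l := by
  rcases Nat.lt_trichotomy k l with h | h | h
  · exact h
  · subst h; omega
  · exact absurd (T.col_inc l k hl1 h hkn hc.symm) (by omega)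

/-- Consecutive entries in the same column are vertically adjacent. -/
private lemma col_adj (h : IsSkewShape lam mu) (T : SkewSYT lam mu n) {a : ℕ}
    (ha1 : 1 ≤ a) (han : a + 1 ≤ n) (hc : T.col a = T.col (a+1)) :
    T.row (a+1) = T.row a + 1 := by
  obtain ⟨hlam, hmu, hml, -⟩ := h
  have hrlt : T.row a < T.row (a+1) := T.col_inc a (a+1) ha1 (by omega) han hc
  by_contra hne
  have hlt : T.row a + 1 < T.row (a+1) := by omega
  have hra1 : 1 ≤ T.row a := T.row_pos a ha1 (by omega)
  have hcell_a := T.mem_cell a ha1 (by omega)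
  have hcell_a1 := T.mem_cell (a+1) (by omega) han
  have hmu' : mu (T.row a + 1) < T.col a :=
    lt_of_le_of_lt (hmu _ hra1) hcell_a.1
  have hlam' : T.col a ≤ lam (T.row a + 1) := by
    have h5 : lam (T.row (a+1)) ≤ lam (T.row a + 1) :=
      anti_of hlam (by omega) (le_of_lt hlt)
    have h6 := hcell_a1.2
    omega
  obtain ⟨k, hk1, hkn, hkr, hkc⟩ := T.surj' (T.row a + 1) (T.col a) (by omega) hmu' hlam'
  have h1 : a < k := lt_of_same_col T ha1 (by omega) hk1 hkn (by rw [hkc]) (by rw [hkr]; omega)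
  have h2 : k < a + 1 := lt_of_same_col T hk1 hkn (by omega) han
    (by rw [hkc, hc]) (by rw [hkr]; omega)
  omega

private def sw (a k : ℕ) : ℕ := if k = a then a+1 else if k = a+1 then a else k

private lemma sw_sw (a k : ℕ) : sw a (sw a k) = k := by
  simp only [sw]; split_ifs <;> omega

private lemma sw_lt {a k l : ℕ} (hkl : k < l) (hne : ¬(k = a ∧ l = a+1)) :
    sw a k < sw a l := by
  simp only [sw]; split_ifs <;> omega

private lemma sw_mem {a k : ℕ} (ha1 : 1 ≤ a) (han : a + 1 ≤ n)
    (hk1 : 1 ≤ k) (hkn : k ≤ n) : 1 ≤ sw a k ∧ sw a k ≤ n := by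
  simp only [sw]; split_ifs <;> omega

private lemma sw_id {a k : ℕ} (ha1 : 1 ≤ a) (han : a + 1 ≤ n)
    (hk : ¬(1 ≤ k ∧ k ≤ n)) : sw a k = k := by
  simp only [sw]; split_ifs <;> omega

private lemma sw_a (a : ℕ) : sw a a = a + 1 := by simp [sw]

private lemma sw_a1 (a : ℕ) : sw a (a+1) = a := by
  simp only [sw]; split_ifs <;> omega

/-- Swapping two consecutive entries that lie in different rows and different columns
preserves standardness. -/
private lemma swap_syt (T : SkewSYT lam mu n) {a : ℕ} (ha1 : 1 ≤ a) (han : a + 1 ≤ n)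
    (hr : T.row a ≠ T.row (a+1)) (hc : T.col a ≠ T.col (a+1)) :
    ∃ S : SkewSYT lam mu n,
      S.row = swapFun T.row a (a+1) ∧ S.col = swapFun T.col a (a+1) := by
  have hmem : ∀ k, 1 ≤ k → k ≤ n → 1 ≤ sw a k ∧ sw a k ≤ n :=
    fun k h1 h2 => sw_mem ha1 han h1 h2
  refine ⟨⟨fun k => T.row (sw a k), fun k => T.col (sw a k),
    ?_, ?_, ?_, ?_, ?_, ?_, ?_, ?_⟩, ?_, ?_⟩
  · intro k h1 h2
    exact T.row_pos _ (hmem k h1 h2).1 (hmem k h1 h2).2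
  · intro k h1 h2
    exact T.mem_cell _ (hmem k h1 h2).1 (hmem k h1 h2).2
  · intro k l hk1 hkn hl1 hln h1 h2
    have := T.inj' _ _ (hmem k hk1 hkn).1 (hmem k hk1 hkn).2
      (hmem l hl1 hln).1 (hmem l hl1 hln).2 h1 h2
    have := congrArg (sw a) this
    rwa [sw_sw, sw_sw] at this
  · intro r c h1 h2 h3
    obtain ⟨k, hk1, hkn, hkr, hkc⟩ := T.surj' r c h1 h2 h3
    exact ⟨sw a k, (hmem k hk1 hkn).1, (hmem k hk1 hkn).2,
      by simp only [sw_sw]; exact hkr, by simp only [sw_sw]; exact hkc⟩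
  · intro k l hk1 hkl hln hrow
    by_cases hcase : k = a ∧ l = a + 1
    · exfalso
      simp only [hcase.1, hcase.2, sw_a, sw_a1] at hrow
      exact hr hrow.symm
    · exact T.row_inc _ _ (hmem k hk1 (by omega)).1 (sw_lt hkl hcase)
        (hmem l (by omega) hln).2 hrow
  · intro k l hk1 hkl hln hcol
    by_cases hcase : k = a ∧ l = a + 1
    · exfalso
      simp only [hcase.1, hcase.2, sw_a, sw_a1] at hcol
      exact hc hcol.symm
    · exact T.col_inc _ _ (hmem k hk1 (by omega)).1 (sw_lt hkl hcase)
        (hmem l (by omega) hln).2 hcol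
  · intro k hk
    simp only [sw_id ha1 han hk]; exact T.row_out k hk
  · intro k hk
    simp only [sw_id ha1 han hk]; exact T.col_out k hk
  · funext k
    simp only [swapFun, sw]
    split_ifs <;> rfl
  · funext k
    simp only [swapFun, sw]
    split_ifs <;> rfl

end Stmt4Aux

/-- If `i` is a peak or a valley of a standard Young tableau `T` of skew shape `lam/mu`,
then the filling `κ_i T` obtained by the Knuth transformation is again a standard Young
tableau of shape `lam/mu`; in particular the two swapped consecutive entries never lie in
the same row or the same column of `T`. -/
theorem stmt4 (lam mu : ℕ → ℕ) (n : ℕ) (h : IsSkewShape lam mu)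
    (T : SkewSYT lam mu n) (i : ℕ) (hi : i ∈ T.peakSet ∪ T.valleySet) :
    (∃ S : SkewSYT lam mu n, S.row = kRow T i ∧ S.col = kCol T i) ∧
    (swapLowCond T.row i → T.row (i-1) ≠ T.row i ∧ T.col (i-1) ≠ T.col i) ∧
    (¬ swapLowCond T.row i → T.row i ≠ T.row (i+1) ∧ T.col i ≠ T.col (i+1)) := by
  have hi2 : 2 ≤ i ∧ i + 1 ≤ n := by
    rcases hi with hp | hv
    · exact ⟨hp.1, hp.2.1⟩
    · exact ⟨hv.1, hv.2.1⟩
  obtain ⟨hi2a, hi2b⟩ := hi2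
  have hii : i - 1 + 1 = i := by omega
  by_cases hcond : swapLowCond T.row i
  · -- swap entries i-1 and i
    have key : T.row (i-1) ≠ T.row i ∧ T.col (i-1) ≠ T.col i := by
      rcases hcond with ⟨h1, h2, h3⟩ | ⟨h1, h2, h3⟩
      · -- case (i): valley with i+1 lower than i-1
        refine ⟨by omega, ?_⟩
        intro hceq
        have hadj : T.row i = T.row (i-1) + 1 := by
          have := col_adj h T (a := i-1) (by omega) (by omega) (by rw [hii]; exact hceq)
          rwa [hii] at this
        have hrow_eq : T.row (i+1) = T.row i := by omega
        have hclt : T.col i < T.col (i+1) :=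
          T.row_inc i (i+1) (by omega) (by omega) hi2b hrow_eq.symm
        obtain ⟨hlam, hmu, hml, -⟩ := h
        have hrpos : 1 ≤ T.row (i-1) := T.row_pos (i-1) (by omega) (by omega)
        have hcell1 := T.mem_cell (i-1) (by omega) (by omega)
        have hcell3 := T.mem_cell (i+1) (by omega) hi2b
        have hmu' : mu (T.row (i-1)) < T.col (i+1) := by
          have := hcell1.1; omega
        have hlam' : T.col (i+1) ≤ lam (T.row (i-1)) := by
          have h5 : lam (T.row (i+1)) ≤ lam (T.row (i-1)) :=
            anti_of hlam hrpos (by omega)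
          have h6 := hcell3.2
          omega
        obtain ⟨k, hk1, hkn, hkr, hkc⟩ :=
          T.surj' (T.row (i-1)) (T.col (i+1)) hrpos hmu' hlam'
        have hk_lt : k < i + 1 := lt_of_same_col T hk1 hkn (by omega) hi2b
          (by rw [hkc]) (by rw [hkr]; omega)
        have hk_gt : i - 1 < k := lt_of_same_row T (by omega) (by omega) hk1 hkn
          hkr.symm (by rw [hkc]; omega)
        have hk_eq : k = i := by omega
        rw [hk_eq] at hkr
        omega
      · -- case (iii): peak with i+1 not lower than i-1
        refine ⟨by omega, ?_⟩
        intro hceq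
        have := T.col_inc (i-1) i (by omega) (by omega) (by omega) hceq
        omega
    obtain ⟨S, hS1, hS2⟩ := swap_syt T (a := i-1) (by omega) (by omega)
      (by rw [hii]; exact key.1) (by rw [hii]; exact key.2)
    rw [hii] at hS1 hS2
    refine ⟨⟨S, ?_, ?_⟩, fun _ => key, fun hn => absurd hcond hn⟩
    · rw [hS1]; simp only [kRow, kSwap, if_pos hcond]
    · rw [hS2]; simp only [kCol, kSwap, if_pos hcond]
  · -- swap entries i and i+1
    have key : T.row i ≠ T.row (i+1) ∧ T.col i ≠ T.col (i+1) := by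
      rcases hi with ⟨-, -, hp1, hp2⟩ | ⟨-, -, hv1, hv2⟩
      · -- case (iv): peak with i+1 lower than i-1
        have h3 : T.row (i-1) < T.row (i+1) := by
          by_contra hle
          exact hcond (Or.inr ⟨hp1, hp2, by omega⟩)
        refine ⟨by omega, ?_⟩
        intro hceq
        have hadj : T.row (i+1) = T.row i + 1 := col_adj h T (by omega) hi2b hceq
        have hre : T.row (i-1) = T.row i := by omega
        have hclt : T.col (i-1) < T.col i :=
          T.row_inc (i-1) i (by omega) (by omega) (by omega) hre
        obtain ⟨hlam, hmu, hml, -⟩ := h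
        have hrpos : 1 ≤ T.row i := T.row_pos i (by omega) (by omega)
        have hcell1 := T.mem_cell (i-1) (by omega) (by omega)
        have hcell3 := T.mem_cell (i+1) (by omega) hi2b
        have hmu' : mu (T.row (i+1)) < T.col (i-1) := by
          have h5 := hmu (T.row i) hrpos
          have h6 := hcell1.1
          rw [hre] at h6
          rw [hadj]
          omega
        have hlam' : T.col (i-1) ≤ lam (T.row (i+1)) := by
          have := hcell3.2; omega
        obtain ⟨k, hk1, hkn, hkr, hkc⟩ :=
          T.surj' (T.row (i+1)) (T.col (i-1)) (by omega) hmu' hlam'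
        have hk_gt : i - 1 < k := lt_of_same_col T (by omega) (by omega) hk1 hkn
          hkc.symm (by rw [hkr]; omega)
        have hk_lt : k < i + 1 := lt_of_same_row T hk1 hkn (by omega) hi2b
          hkr (by rw [hkc]; omega)
        have hk_eq : k = i := by omega
        rw [hk_eq] at hkc
        omega
      · -- case (ii): valley with i+1 not lower than i-1
        have h3 : T.row (i+1) ≤ T.row (i-1) := by
          by_contra hle
          exact hcond (Or.inl ⟨hv1, hv2, by omega⟩)
        refine ⟨by omega, ?_⟩
        intro hceq
        have := T.col_inc i (i+1) (by omega) (by omega) hi2b hceq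
        omega
    obtain ⟨S, hS1, hS2⟩ := swap_syt T (a := i) (by omega) hi2b key.1 key.2
    refine ⟨⟨S, ?_, ?_⟩, fun hc => absurd hc hcond, fun _ => key⟩
    · rw [hS1]; simp only [kRow, kSwap, if_neg hcond]
    · rw [hS2]; simp only [kCol, kSwap, if_neg hcond]
end

section
/- The Knuth transformation κ_i on standard Young tableaux is an involution on its domain of definition: if i is a peak or a valley of T, then κ_i(κ_i(T)) = T; moreover κ_i turns a peak at i into a valley at i and vice versa. -/
lemma swapFun_swapFun (f : ℕ → ℕ) (a b : ℕ) (hab : a ≠ b) :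
    swapFun (swapFun f a b) a b = f := by
  funext k
  simp only [swapFun]
  split_ifs with h1 h2 <;> simp_all

/-- The Knuth transformation `κ_i` on standard Young tableaux is an involution on its
domain of definition: if `i` is a peak or a valley of `T` and `S = κ_i T`, then
`κ_i S = T`; moreover `κ_i` turns a peak at `i` into a valley at `i` and vice versa. -/
theorem stmt5 (lam mu : ℕ → ℕ) (n : ℕ) (h : IsSkewShape lam mu)
    (T S : SkewSYT lam mu n) (i : ℕ) (hi : i ∈ T.peakSet ∪ T.valleySet)
    (hS : S.row = kRow T i ∧ S.col = kCol T i) :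
    (kRow S i = T.row ∧ kCol S i = T.col) ∧
    (i ∈ T.peakSet → i ∈ S.valleySet) ∧ (i ∈ T.valleySet → i ∈ S.peakSet) := by
  obtain ⟨hr, hc⟩ := hS
  have hp : i ∈ T.peakSet ∨ i ∈ T.valleySet := hi
  have h2 : 2 ≤ i := by rcases hp with h | h <;> exact h.1
  have hn : i + 1 ≤ n := by rcases hp with h | h <;> exact h.2.1
  rcases hp with hpk | hvl
  · obtain ⟨-, -, a1, a2⟩ := hpk
    by_cases hB : T.row (i+1) ≤ T.row (i-1)
    · -- case (iii): swap i-1 and i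
      have hcond : swapLowCond T.row i := by unfold swapLowCond; omega
      have hrow : S.row = swapFun T.row (i-1) i := by
        rw [hr]; simp [kRow, kSwap, hcond]
      have hcol : S.col = swapFun T.col (i-1) i := by
        rw [hc]; simp [kCol, kSwap, hcond]
      have e1 : S.row (i-1) = T.row i := by rw [hrow]; unfold swapFun; split_ifs <;> omega
      have e2 : S.row i = T.row (i-1) := by
        rw [hrow]; unfold swapFun; split_ifs <;> omega
      have e3 : S.row (i+1) = T.row (i+1) := by
        rw [hrow]; unfold swapFun; split_ifs <;> omega
      have hcond' : swapLowCond S.row i := by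
        unfold swapLowCond; rw [e1, e2, e3]; omega
      refine ⟨⟨?_, ?_⟩, fun _ => ⟨h2, hn, by omega, by omega⟩,
        fun hv => absurd hv.2.2.1 (by omega)⟩
      · show kSwap S.row i S.row = T.row
        rw [kSwap, if_pos hcond', hrow, swapFun_swapFun _ _ _ (by omega)]
      · show kSwap S.row i S.col = T.col
        rw [kSwap, if_pos hcond', hcol, swapFun_swapFun _ _ _ (by omega)]
    · -- case (iv): swap i and i+1
      have hcond : ¬ swapLowCond T.row i := by unfold swapLowCond; omega
      have hrow : S.row = swapFun T.row i (i+1) := by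
        rw [hr]; simp [kRow, kSwap, hcond]
      have hcol : S.col = swapFun T.col i (i+1) := by
        rw [hc]; simp [kCol, kSwap, hcond]
      have e1 : S.row (i-1) = T.row (i-1) := by
        rw [hrow]; unfold swapFun; split_ifs <;> omega
      have e2 : S.row i = T.row (i+1) := by rw [hrow]; unfold swapFun; split_ifs <;> omega
      have e3 : S.row (i+1) = T.row i := by
        rw [hrow]; unfold swapFun; split_ifs <;> omega
      have hcond' : ¬ swapLowCond S.row i := by
        unfold swapLowCond; rw [e1, e2, e3]; omega
      refine ⟨⟨?_, ?_⟩, fun _ => ⟨h2, hn, by omega, by omega⟩,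
        fun hv => absurd hv.2.2.1 (by omega)⟩
      · show kSwap S.row i S.row = T.row
        rw [kSwap, if_neg hcond', hrow, swapFun_swapFun _ _ _ (by omega)]
      · show kSwap S.row i S.col = T.col
        rw [kSwap, if_neg hcond', hcol, swapFun_swapFun _ _ _ (by omega)]
  · obtain ⟨-, -, a1, a2⟩ := hvl
    by_cases hB : T.row (i-1) < T.row (i+1)
    · -- case (i): swap i-1 and i
      have hcond : swapLowCond T.row i := by unfold swapLowCond; omega
      have hrow : S.row = swapFun T.row (i-1) i := by
        rw [hr]; simp [kRow, kSwap, hcond]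
      have hcol : S.col = swapFun T.col (i-1) i := by
        rw [hc]; simp [kCol, kSwap, hcond]
      have e1 : S.row (i-1) = T.row i := by rw [hrow]; unfold swapFun; split_ifs <;> omega
      have e2 : S.row i = T.row (i-1) := by
        rw [hrow]; unfold swapFun; split_ifs <;> omega
      have e3 : S.row (i+1) = T.row (i+1) := by
        rw [hrow]; unfold swapFun; split_ifs <;> omega
      have hcond' : swapLowCond S.row i := by
        unfold swapLowCond; rw [e1, e2, e3]; omega
      refine ⟨⟨?_, ?_⟩, fun hv => absurd hv.2.2.1 (by omega),
        fun _ => ⟨h2, hn, by omega, by omega⟩⟩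
      · show kSwap S.row i S.row = T.row
        rw [kSwap, if_pos hcond', hrow, swapFun_swapFun _ _ _ (by omega)]
      · show kSwap S.row i S.col = T.col
        rw [kSwap, if_pos hcond', hcol, swapFun_swapFun _ _ _ (by omega)]
    · -- case (ii): swap i and i+1
      have hcond : ¬ swapLowCond T.row i := by unfold swapLowCond; omega
      have hrow : S.row = swapFun T.row i (i+1) := by
        rw [hr]; simp [kRow, kSwap, hcond]
      have hcol : S.col = swapFun T.col i (i+1) := by
        rw [hc]; simp [kCol, kSwap, hcond]
      have e1 : S.row (i-1) = T.row (i-1) := by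
        rw [hrow]; unfold swapFun; split_ifs <;> omega
      have e2 : S.row i = T.row (i+1) := by rw [hrow]; unfold swapFun; split_ifs <;> omega
      have e3 : S.row (i+1) = T.row i := by
        rw [hrow]; unfold swapFun; split_ifs <;> omega
      have hcond' : ¬ swapLowCond S.row i := by
        unfold swapLowCond; rw [e1, e2, e3]; omega
      refine ⟨⟨?_, ?_⟩, fun hv => absurd hv.2.2.1 (by omega),
        fun _ => ⟨h2, hn, by omega, by omega⟩⟩
      · show kSwap S.row i S.row = T.row
        rw [kSwap, if_neg hcond', hrow, swapFun_swapFun _ _ _ (by omega)]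
      · show kSwap S.row i S.col = T.col
        rw [kSwap, if_neg hcond', hcol, swapFun_swapFun _ _ _ (by omega)]
end

section
/- Let T be an SYT of skew shape λ/μ, β(T) its Yamanouchi permutation, and i a peak or valley of T. Then β(κ_i(T)) = κ_i(β(T)), where the left κ_i is the Knuth transformation on SYTs and the right κ_i is the Knuth transformation on permutations. -/
/-- The Knuth transformation `κ_i` on words/permutations (moves `acb ↦ cab`, `bca ↦ bac`,
`cab ↦ acb`, `bac ↦ bca` for `a < b < c` at positions `i-1, i, i+1`). -/
def kappaP (w : ℕ → ℕ) (i : ℕ) : ℕ → ℕ :=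
  if (w (i-1) < w i ∧ w (i+1) < w i ∧ w (i-1) < w (i+1)) ∨
      (w i < w (i-1) ∧ w i < w (i+1) ∧ w (i+1) < w (i-1)) then
    fun j => if j = i - 1 then w i else if j = i then w (i-1) else w j
  else
    fun j => if j = i then w (i+1) else if j = i + 1 then w i else w j

/-- The peak set of a permutation/word: `w (i-1) < w i > w (i+1)` with `2 ≤ i ≤ n-1`. -/
def peakSetP (n : ℕ) (w : ℕ → ℕ) : Set ℕ :=
  {i | 2 ≤ i ∧ i + 1 ≤ n ∧ w (i-1) < w i ∧ w (i+1) < w i}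

/-- The valley set of a permutation/word: `w (i-1) > w i < w (i+1)` with `2 ≤ i ≤ n-1`. -/
def valleySetP (n : ℕ) (w : ℕ → ℕ) : Set ℕ :=
  {i | 2 ≤ i ∧ i + 1 ≤ n ∧ w i < w (i-1) ∧ w i < w (i+1)}

/-- The Yamanouchi permutation associated to the Yamanouchi word `y` of an SYT of skew
shape `lam/mu` (with `a_i = lam i - mu i`): the `a_i` occurrences of the letter `i` are
replaced, from left to right in decreasing order, by the numbers
`a_1 + ⋯ + a_{i-1} + 1, …, a_1 + ⋯ + a_{i-1} + a_i`; thus position `j` receives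
`a_1 + ⋯ + a_{y j - 1}` plus the number of occurrences of `y j` at positions `≥ j`. -/
def yamPerm (lam mu : ℕ → ℕ) (n : ℕ) (y : ℕ → ℕ) : ℕ → ℕ :=
  fun j => (∑ t ∈ Finset.Ico 1 (y j), (lam t - mu t)) +
    ((Finset.Icc j n).filter (fun t => y t = y j)).card

/-!
The values `β(T)` gives to row `r` lie above all values given to earlier rows and decrease
from left to right, so for positions `j < k` we have `β j < β k ↔ row j < row k` and
`β k < β j ↔ row k ≤ row j`. Hence the pattern test of `κ_i` on `β(T)` makes the same case
distinction as `κ_i` on `T`. In either case `κ_i` exchanges two adjacent entries lying in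
different rows, and exchanging two adjacent distinct letters of a word only exchanges the
corresponding values of its Yamanouchi permutation.
-/

open Finset

lemma swapFun_eq_comp_swap (f : ℕ → ℕ) (a b : ℕ) :
    swapFun f a b = f ∘ Equiv.swap a b := by
  funext k
  simp only [swapFun, Function.comp_apply, Equiv.swap_apply_def]
  split_ifs <;> rfl

lemma card_filter_comp_swap {α β : Type*} [DecidableEq α] [DecidableEq β] (s : Finset α)
    (y : α → β) (c : β) {a b : α} (hab : a ∈ s ↔ b ∈ s) :
    #{t ∈ s | y (Equiv.swap a b t) = c} = #{t ∈ s | y t = c} := by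
  refine card_equiv (Equiv.swap a b) fun t => ?_
  have hmem : Equiv.swap a b t ∈ s ↔ t ∈ s := by
    rw [Equiv.swap_apply_def]
    split_ifs with hta htb
    · subst hta; exact hab.symm
    · subst htb; exact hab
    · rfl
  simp only [mem_filter, hmem]

lemma filter_Icc_eq_filter_Icc_succ {β : Type*} [DecidableEq β] (f : ℕ → β) {p n : ℕ} {c : β}
    (h : f p ≠ c) : {t ∈ Icc p n | f t = c} = {t ∈ Icc (p + 1) n | f t = c} := by
  ext t
  simp only [mem_filter, mem_Icc]
  constructor
  · rintro ⟨⟨hpt, htn⟩, hc⟩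
    exact ⟨⟨lt_of_le_of_ne hpt (by rintro rfl; exact h hc), htn⟩, hc⟩
  · rintro ⟨⟨hpt, htn⟩, hc⟩
    exact ⟨⟨by omega, htn⟩, hc⟩

theorem yamPerm_comp_swap (lam mu : ℕ → ℕ) {n p : ℕ} (y : ℕ → ℕ) (hp : p + 1 ≤ n)
    (hne : y p ≠ y (p + 1)) :
    yamPerm lam mu n (y ∘ Equiv.swap p (p + 1)) =
      yamPerm lam mu n y ∘ Equiv.swap p (p + 1) := by
  funext j
  simp only [yamPerm, Function.comp_apply]
  congr 1
  rcases eq_or_ne j p with rfl | hjp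
  · rw [Equiv.swap_apply_left, card_filter_comp_swap _ _ _ (by simp only [mem_Icc]; omega),
      filter_Icc_eq_filter_Icc_succ y hne]
  rcases eq_or_ne j (p + 1) with rfl | hjp1
  · rw [Equiv.swap_apply_right,
      ← filter_Icc_eq_filter_Icc_succ (fun t => y (Equiv.swap p (p + 1) t)) (by simpa using hne.symm),
      card_filter_comp_swap _ _ _ (by simp only [mem_Icc]; omega)]
  rw [Equiv.swap_apply_of_ne_of_ne hjp hjp1,
    card_filter_comp_swap _ _ _ (by simp only [mem_Icc]; omega)]

theorem yamPerm_swapFun (lam mu : ℕ → ℕ) {n p : ℕ} (y : ℕ → ℕ) (hp : p + 1 ≤ n)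
    (hne : y p ≠ y (p + 1)) :
    yamPerm lam mu n (swapFun y p (p + 1)) = swapFun (yamPerm lam mu n y) p (p + 1) := by
  simp only [swapFun_eq_comp_swap, yamPerm_comp_swap lam mu y hp hne]

namespace SkewSYT

variable {lam mu : ℕ → ℕ} {n : ℕ} (T : SkewSYT lam mu n)

lemma card_filter_row_eq_le {j : ℕ} (hj : 1 ≤ j) :
    #{t ∈ Icc j n | T.row t = T.row j} ≤ lam (T.row j) - mu (T.row j) := by
  rw [← Nat.card_Ioc (mu (T.row j)) (lam (T.row j))]
  refine card_le_card_of_injOn T.col (fun t ht => ?_) fun a ha b hb hab => ?_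
  · rw [mem_coe, mem_filter, mem_Icc] at ht
    simpa [ht.2] using T.mem_cell t (hj.trans ht.1.1) ht.1.2
  · rw [mem_coe, mem_filter, mem_Icc] at ha hb
    exact T.inj' a b (hj.trans ha.1.1) ha.1.2 (hj.trans hb.1.1) hb.1.2 (ha.2.trans hb.2.symm) hab

lemma yamPerm_lt_of_row_lt {j k : ℕ} (hj : 1 ≤ j) (hjn : j ≤ n) (hkn : k ≤ n)
    (hr : T.row j < T.row k) : yamPerm lam mu n T.row j < yamPerm lam mu n T.row k := by
  have hcount_j := T.card_filter_row_eq_le hj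
  have hcount_k : 0 < #{t ∈ Icc k n | T.row t = T.row k} :=
    card_pos.mpr ⟨k, by simp [hkn]⟩
  have hsum : ∑ t ∈ Ico 1 (T.row j), (lam t - mu t) + (lam (T.row j) - mu (T.row j))
      ≤ ∑ t ∈ Ico 1 (T.row k), (lam t - mu t) := by
    rw [← sum_Ico_succ_top (T.row_pos j hj hjn)]
    exact sum_le_sum_of_subset (Ico_subset_Ico le_rfl hr)
  unfold yamPerm
  omega

lemma yamPerm_lt_of_row_eq {j k : ℕ} (hjk : j < k) (hkn : k ≤ n) (hr : T.row j = T.row k) :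
    yamPerm lam mu n T.row k < yamPerm lam mu n T.row j := by
  have hsub : {t ∈ Icc k n | T.row t = T.row j} ⊂ {t ∈ Icc j n | T.row t = T.row j} := by
    refine (ssubset_iff_of_subset
      (filter_subset_filter _ (Icc_subset_Icc hjk.le le_rfl))).mpr ⟨j, ?_, ?_⟩
    · simp only [mem_filter, mem_Icc]
      exact ⟨⟨le_rfl, hjk.le.trans hkn⟩, trivial⟩
    · simp only [mem_filter, mem_Icc]
      omega
  unfold yamPerm
  rw [← hr]
  have := card_lt_card hsub
  omega

lemma yamPerm_lt_yamPerm_iff {j k : ℕ} (hj : 1 ≤ j) (hjk : j < k) (hkn : k ≤ n) :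
    yamPerm lam mu n T.row j < yamPerm lam mu n T.row k ↔ T.row j < T.row k := by
  rcases lt_trichotomy (T.row j) (T.row k) with hr | hr | hr
  · exact iff_of_true (T.yamPerm_lt_of_row_lt hj (by omega) hkn hr) hr
  · exact iff_of_false (T.yamPerm_lt_of_row_eq hjk hkn hr).not_gt hr.not_lt
  · exact iff_of_false (T.yamPerm_lt_of_row_lt (by omega) hkn (by omega) hr).not_gt hr.not_gt

lemma yamPerm_lt_yamPerm_iff_row_le {j k : ℕ} (hj : 1 ≤ j) (hjk : j < k) (hkn : k ≤ n) :
    yamPerm lam mu n T.row k < yamPerm lam mu n T.row j ↔ T.row k ≤ T.row j := by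
  rcases lt_trichotomy (T.row j) (T.row k) with hr | hr | hr
  · exact iff_of_false (T.yamPerm_lt_of_row_lt hj (by omega) hkn hr).not_gt hr.not_ge
  · exact iff_of_true (T.yamPerm_lt_of_row_eq hjk hkn hr) hr.ge
  · exact iff_of_true (T.yamPerm_lt_of_row_lt (by omega) hkn (by omega) hr) hr.le

theorem kappaP_yamPerm_eq_kSwap {i : ℕ} (hi : 2 ≤ i) (hin : i + 1 ≤ n) :
    kappaP (yamPerm lam mu n T.row) i = kSwap T.row i (yamPerm lam mu n T.row) := by
  obtain ⟨m, rfl⟩ : ∃ m, i = m + 1 := ⟨i - 1, by omega⟩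
  simp only [kappaP, kSwap, swapLowCond, Nat.add_sub_cancel,
    T.yamPerm_lt_yamPerm_iff (j := m) (k := m + 1) (by omega) (by omega) (by omega),
    T.yamPerm_lt_yamPerm_iff (j := m) (k := m + 1 + 1) (by omega) (by omega) (by omega),
    T.yamPerm_lt_yamPerm_iff (j := m + 1) (k := m + 1 + 1) (by omega) (by omega) (by omega),
    T.yamPerm_lt_yamPerm_iff_row_le (j := m) (k := m + 1) (by omega) (by omega) (by omega),
    T.yamPerm_lt_yamPerm_iff_row_le (j := m) (k := m + 1 + 1) (by omega) (by omega) (by omega),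
    T.yamPerm_lt_yamPerm_iff_row_le (j := m + 1) (k := m + 1 + 1) (by omega) (by omega) (by omega)]
  rfl

theorem yamPerm_kSwap {i : ℕ} (hi : i ∈ T.peakSet ∪ T.valleySet) :
    yamPerm lam mu n (kSwap T.row i T.row) = kSwap T.row i (yamPerm lam mu n T.row) := by
  have hbounds : 2 ≤ i ∧ i + 1 ≤ n := by rcases hi with hi | hi <;> exact ⟨hi.1, hi.2.1⟩
  obtain ⟨m, rfl⟩ : ∃ m, i = m + 1 := ⟨i - 1, by omega⟩
  have hrows : T.row (m + 1) ≤ T.row m ∧ T.row (m + 1) < T.row (m + 1 + 1) ∨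
      T.row m < T.row (m + 1) ∧ T.row (m + 1 + 1) ≤ T.row (m + 1) := by
    rcases hi with ⟨-, -, h1, h2⟩ | ⟨-, -, h1, h2⟩ <;> simp_all
  unfold kSwap
  split_ifs with hsw <;> simp only [swapLowCond, Nat.add_sub_cancel] at hsw ⊢
  · exact yamPerm_swapFun lam mu T.row (by omega) (by omega)
  · exact yamPerm_swapFun lam mu T.row (by omega) (by omega)

end SkewSYT

theorem stmt6_general (lam mu : ℕ → ℕ) (n : ℕ)
    (T S : SkewSYT lam mu n) (i : ℕ) (hi : i ∈ T.peakSet ∪ T.valleySet)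
    (hS : S.row = kRow T i ∧ S.col = kCol T i) :
    yamPerm lam mu n S.row = kappaP (yamPerm lam mu n T.row) i := by
  obtain ⟨hi2, hin⟩ : 2 ≤ i ∧ i + 1 ≤ n := by rcases hi with hi | hi <;> exact ⟨hi.1, hi.2.1⟩
  rw [hS.1, kRow, T.yamPerm_kSwap hi, T.kappaP_yamPerm_eq_kSwap hi2 hin]

/-- For `T` an SYT of skew shape `lam/mu`, `β` its Yamanouchi permutation map and `i` a
peak or valley of `T`: `β(κ_i T) = κ_i(β T)`, where the left Knuth transformation is the
one on SYTs and the right one is the one on permutations. -/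
theorem stmt6 (lam mu : ℕ → ℕ) (n : ℕ) (h : IsSkewShape lam mu)
    (T S : SkewSYT lam mu n) (i : ℕ) (hi : i ∈ T.peakSet ∪ T.valleySet)
    (hS : S.row = kRow T i ∧ S.col = kCol T i) :
    yamPerm lam mu n S.row = kappaP (yamPerm lam mu n T.row) i :=
  stmt6_general lam mu n T S i hi hS
end

section
/- Let T be a standard Young tableau of skew shape λ/μ and let π = β(T) be its Yamanouchi permutation. Then Peak(T) = Val(π) and Val(T) = Peak(π). -/
/-! The Yamanouchi permutation sends the entries of row `r` into the block
`(a_1 + ⋯ + a_{r-1}, a_1 + ⋯ + a_r]`, and inside a row it decreases from left to right.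
So for `i < j` we have `π_i < π_j` exactly when `j` lies in a strictly lower row than `i`:
the descents of `T` are the ascents of `π` and vice versa, which exchanges peaks and
valleys. -/

open Finset

theorem SkewSYT.card_filter_row_eq_le_s7 {lam mu : ℕ → ℕ} {n : ℕ} (T : SkewSYT lam mu n)
    (r : ℕ) : #{k ∈ Icc 1 n | T.row k = r} ≤ lam r - mu r := by
  have hcol := card_le_card_of_injOn T.col (s := {k ∈ Icc 1 n | T.row k = r})
    (t := Ioc (mu r) (lam r))
    (fun k hk => by
      simp only [coe_filter, Set.mem_ofPred_eq, mem_Icc] at hk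
      obtain ⟨⟨hk1, hkn⟩, rfl⟩ := hk
      exact mem_coe.2 (mem_Ioc.2 (T.mem_cell k hk1 hkn)))
    (fun k hk l hl hkl => by
      simp only [coe_filter, Set.mem_ofPred_eq, mem_Icc] at hk hl
      exact T.inj' k l hk.1.1 hk.1.2 hl.1.1 hl.1.2 (hk.2.trans hl.2.symm) hkl)
  simpa only [Nat.card_Ioc] using hcol

section yamPerm

variable {lam mu : ℕ → ℕ} {n : ℕ} {y : ℕ → ℕ}

theorem sum_Ico_lt_yamPerm {k : ℕ} (hkn : k ≤ n) :
    ∑ t ∈ Ico 1 (y k), (lam t - mu t) < yamPerm lam mu n y k := by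
  have : 0 < #{t ∈ Icc k n | y t = y k} := card_pos.2 ⟨k, by simp [hkn]⟩
  simp only [yamPerm]
  omega

theorem yamPerm_le_sum_Ico
    (hcount : ∀ r, #{t ∈ Icc 1 n | y t = r} ≤ lam r - mu r) {k : ℕ} (hk : 1 ≤ k)
    (hyk : 1 ≤ y k) :
    yamPerm lam mu n y k ≤ ∑ t ∈ Ico 1 (y k + 1), (lam t - mu t) := by
  have : #{t ∈ Icc k n | y t = y k} ≤ lam (y k) - mu (y k) :=
    (card_le_card (filter_subset_filter _ (Icc_subset_Icc_left hk))).trans (hcount (y k))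
  rw [sum_Ico_succ_top hyk]
  simp only [yamPerm]
  omega

theorem yamPerm_lt_yamPerm_of_lt
    (hcount : ∀ r, #{t ∈ Icc 1 n | y t = r} ≤ lam r - mu r) {i j : ℕ} (hi : 1 ≤ i)
    (hyi : 1 ≤ y i) (hj : j ≤ n) (hy : y i < y j) :
    yamPerm lam mu n y i < yamPerm lam mu n y j :=
  calc yamPerm lam mu n y i
      ≤ ∑ t ∈ Ico 1 (y i + 1), (lam t - mu t) := yamPerm_le_sum_Ico hcount hi hyi
    _ ≤ ∑ t ∈ Ico 1 (y j), (lam t - mu t) :=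
        sum_le_sum_of_subset (Ico_subset_Ico_right hy)
    _ < yamPerm lam mu n y j := sum_Ico_lt_yamPerm hj

theorem yamPerm_lt_yamPerm_of_eq {i j : ℕ} (hij : i < j) (hin : i ≤ n) (hy : y i = y j) :
    yamPerm lam mu n y j < yamPerm lam mu n y i := by
  have hsub : {t ∈ Icc j n | y t = y j} ⊂ {t ∈ Icc i n | y t = y j} := by
    refine ssubset_iff_of_subset (fun t ht => ?_) |>.2 ⟨i, by simp [hin, hy], by simp [hij]⟩
    simp only [mem_filter, mem_Icc] at ht ⊢
    exact ⟨⟨hij.le.trans ht.1.1, ht.1.2⟩, ht.2⟩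
  simp only [yamPerm, hy]
  exact Nat.add_lt_add_left (card_lt_card hsub) _

theorem yamPerm_lt_yamPerm_iff (hpos : ∀ k, 1 ≤ k → k ≤ n → 1 ≤ y k)
    (hcount : ∀ r, #{t ∈ Icc 1 n | y t = r} ≤ lam r - mu r) {i j : ℕ}
    (hi : 1 ≤ i) (hij : i < j) (hj : j ≤ n) :
    yamPerm lam mu n y i < yamPerm lam mu n y j ↔ y i < y j := by
  refine ⟨fun hπ => ?_, yamPerm_lt_yamPerm_of_lt hcount hi (hpos i hi (by omega)) hj⟩
  by_contra! hy
  rcases hy.eq_or_lt with hy | hy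
  · exact (yamPerm_lt_yamPerm_of_eq hij (by omega) hy.symm).asymm hπ
  · exact (yamPerm_lt_yamPerm_of_lt hcount (by omega) (hpos j (by omega) hj) (by omega)
      hy).asymm hπ

theorem yamPerm_lt_yamPerm_iff_le (hpos : ∀ k, 1 ≤ k → k ≤ n → 1 ≤ y k)
    (hcount : ∀ r, #{t ∈ Icc 1 n | y t = r} ≤ lam r - mu r) {i j : ℕ}
    (hi : 1 ≤ i) (hij : i < j) (hj : j ≤ n) :
    yamPerm lam mu n y j < yamPerm lam mu n y i ↔ y j ≤ y i := by
  refine ⟨fun hπ => ?_, fun hy => ?_⟩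
  · by_contra! hy
    exact hπ.asymm ((yamPerm_lt_yamPerm_iff hpos hcount hi hij hj).2 hy)
  · rcases hy.eq_or_lt with hy | hy
    · exact yamPerm_lt_yamPerm_of_eq hij (by omega) hy.symm
    · exact yamPerm_lt_yamPerm_of_lt hcount (by omega) (hpos j (by omega) hj) (by omega) hy

end yamPerm

theorem stmt7_general (lam mu : ℕ → ℕ) (n : ℕ) (T : SkewSYT lam mu n) :
    T.peakSet = valleySetP n (yamPerm lam mu n T.row) ∧
    T.valleySet = peakSetP n (yamPerm lam mu n T.row) := by
  have hpos := T.row_pos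
  have hcount := T.card_filter_row_eq_le_s7
  refine ⟨Set.ext fun i => ?_, Set.ext fun i => ?_⟩ <;>
    simp only [SkewSYT.peakSet, SkewSYT.valleySet, valleySetP, peakSetP, Set.mem_ofPred_eq] <;>
    refine and_congr_right fun hi => and_congr_right fun hin => ?_ <;>
    simp only [yamPerm_lt_yamPerm_iff hpos hcount (i := i) (j := i + 1) (by omega) (by omega) hin,
      yamPerm_lt_yamPerm_iff_le hpos hcount (i := i) (j := i + 1) (by omega) (by omega) hin,
      yamPerm_lt_yamPerm_iff hpos hcount (i := i - 1) (j := i) (by omega) (by omega) (by omega),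
      yamPerm_lt_yamPerm_iff_le hpos hcount (i := i - 1) (j := i) (by omega) (by omega) (by omega)]

/-- For `T` a standard Young tableau of skew shape `lam/mu` and `π = β T` its Yamanouchi
permutation: `Peak(T) = Val(π)` and `Val(T) = Peak(π)`. -/
theorem stmt7 (lam mu : ℕ → ℕ) (n : ℕ) (h : IsSkewShape lam mu)
    (T : SkewSYT lam mu n) :
    T.peakSet = valleySetP n (yamPerm lam mu n T.row) ∧
    T.valleySet = peakSetP n (yamPerm lam mu n T.row) :=
  stmt7_general lam mu n T
end

section
/- Let λ be a Young diagram of size n with rank(λ) ≥ 2 (i.e. λ_2 ≥ 2). Then no standard Young tableau T of shape λ has Peak(T) = ∅, and no standard Young tableau T of shape λ has Val(T) = ∅. -/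
/-- If the Young diagram `lam` has rank at least `2` (i.e. `lam 2 ≥ 2`), then no standard
Young tableau of (straight) shape `lam` has empty peak set, and none has empty valley
set. -/
theorem stmt12 (lam : ℕ → ℕ) (n : ℕ)
    (hlam : ∀ i, 1 ≤ i → lam (i+1) ≤ lam i) (hrank : 2 ≤ lam 2) :
    ∀ T : SkewSYT lam (fun _ => 0) n, T.peakSet ≠ ∅ ∧ T.valleySet ≠ ∅ := by
  intro T
  have hl1 : 2 ≤ lam 1 := le_trans hrank (hlam 1 le_rfl)
  obtain ⟨q, hq1, hqn, hqr, hqc⟩ := T.surj' 1 1 le_rfl (by norm_num) (by omega)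
  obtain ⟨a, ha1, han, har, hac⟩ := T.surj' 1 2 le_rfl (by norm_num) (by omega)
  obtain ⟨p, hp1, hpn, hpr, hpc⟩ := T.surj' 2 1 (by norm_num) (by norm_num) (by omega)
  obtain ⟨b, hb1, hbn, hbr, hbc⟩ := T.surj' 2 2 (by norm_num) (by norm_num) hrank
  have col_lt : ∀ k l, 1 ≤ k → k ≤ n → 1 ≤ l → l ≤ n → T.col k = T.col l →
      T.row k < T.row l → k < l := by
    intro k l hk hkn hl hln hc hr
    rcases lt_trichotomy k l with h|h|h
    · exact h
    · subst h; omega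
    · exact absurd (T.col_inc l k hl h hkn hc.symm) (by omega)
  have row_lt : ∀ k l, 1 ≤ k → k ≤ n → 1 ≤ l → l ≤ n → T.row k = T.row l →
      T.col k < T.col l → k < l := by
    intro k l hk hkn hl hln hr hc
    rcases lt_trichotomy k l with h|h|h
    · exact h
    · subst h; omega
    · exact absurd (T.row_inc l k hl h hkn hr.symm) (by omega)
  have hqa : q < a := row_lt q a hq1 hqn ha1 han (by omega) (by omega)
  have hab : a < b := col_lt a b ha1 han hb1 hbn (by omega) (by omega)
  have hqp : q < p := col_lt q p hq1 hqn hp1 hpn (by omega) (by omega)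
  have hpb : p ≠ b := by intro h; rw [h] at hpc; omega
  have exd : ∀ t s, s ≤ t → T.row s < T.row t →
      ∃ i, s ≤ i ∧ i < t ∧ T.row i < T.row (i+1) := by
    intro t
    induction t with
    | zero =>
      intro s h1 h2
      have : s = 0 := by omega
      subst this; omega
    | succ t ih =>
      intro s h1 h2
      rcases eq_or_lt_of_le h1 with h|h
      · subst h; omega
      · by_cases hc : T.row t < T.row (t+1)
        · exact ⟨t, by omega, by omega, hc⟩
        · push_neg at hc
          obtain ⟨i, h3, h4, h5⟩ := ih s (by omega) (by omega)
          exact ⟨i, h3, by omega, h5⟩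
  have chain : ∀ t s, s ≤ t → (∀ j, s ≤ j → j < t → T.row j < T.row (j+1)) →
      T.row s + (t - s) ≤ T.row t := by
    intro t
    induction t with
    | zero =>
      intro s h1 _
      have : s = 0 := by omega
      subst this; simp
    | succ t ih =>
      intro s h1 hall
      rcases eq_or_lt_of_le h1 with h|h
      · subst h; simp
      · have h2 := ih s (by omega) (fun j hj hj' => hall j hj (by omega))
        have h3 := hall t (by omega) (by omega)
        omega
  constructor
  · intro hemp
    have hP := Set.eq_empty_iff_forall_notMem.mp hemp
    obtain ⟨i, hia, hib, hdi⟩ := exd b a (le_of_lt hab) (by omega)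
    have back : ∀ d j, 1 ≤ j → j ≤ i → i - j ≤ d → T.row j < T.row (j+1) := by
      intro d
      induction d with
      | zero =>
        intro j h1 h2 h3
        have : j = i := by omega
        subst this; exact hdi
      | succ d ih =>
        intro j h1 h2 h3
        rcases eq_or_lt_of_le h2 with h|h
        · subst h; exact hdi
        · have hnext := ih (j+1) (by omega) (by omega) (by omega)
          by_contra hcon
          push_neg at hcon
          exact hP (j+1) ⟨by omega, by omega, by simpa using hcon, hnext⟩
    have hch := chain a 1 (by omega) (fun j hj hj' => back i j hj (by omega) (by omega))
    have hr1 : 1 ≤ T.row 1 := T.row_pos 1 le_rfl (by omega)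
    omega
  · intro hemp
    have hV := Set.eq_empty_iff_forall_notMem.mp hemp
    have key : ∀ x y, 1 ≤ x → x < y → y ≤ n → q < x → T.row x = 2 → T.row y = 2 → False := by
      intro x y hx hxy hyn hqx hrx hry
      obtain ⟨i, hqi, hix, hdi⟩ := exd x q (by omega) (by omega)
      have fwd : ∀ j, i ≤ j → j + 1 ≤ n → T.row j < T.row (j+1) := by
        intro j
        induction j with
        | zero => intro h _; omega
        | succ j ih =>
          intro hij hjn
          rcases eq_or_lt_of_le hij with h|h
          · rw [h] at hdi; exact hdi
          · have hprev := ih (by omega) (by omega)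
            by_contra hcon
            push_neg at hcon
            exact hV (j+1) ⟨by omega, by omega, by simpa using hprev, hcon⟩
      have hch := chain y x (le_of_lt hxy)
        (fun j hj hj' => fwd j (by omega) (by omega))
      omega
    rcases lt_or_gt_of_ne hpb with h | h
    · exact key p b hp1 h hbn hqp hpr hbr
    · exact key b p hb1 h hpn (by omega) hbr hpr
end

section
/- Let λ be a Young diagram of size n with rank(λ) = 1 (i.e. λ is a hook: λ = (m, 1, 1, …, 1)). Then there is exactly one standard Young tableau T of shape λ with Peak(T) = ∅ and exactly one standard Young tableau T of shape λ with Val(T) = ∅. -/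
/-!
In a tableau of hook shape every entry below the first row lies in the first column, so the
tableau is determined by the set `L` of these leg entries: their rows increase along `L`, and the
rows of any standard tableau determine its columns. Moreover `i` is a descent exactly when
`i + 1 ∈ L`. Hence a peak-free tableau has `L` closed under predecessors in `{2, …, n}` and a
valley-free one has `L` closed under successors; since `L` has `r - 1` elements it must be
`{2, …, r}`, resp. `{n - r + 2, …, n}`, the leg of the column-first, resp. row-first, filling.
-/

open Finset

namespace SkewSYT

variable {lam mu : ℕ → ℕ} {n : ℕ}

/-- The entries `j ≤ k` in the row of `k` are exactly those in the columns
`mu (T.row k) + 1, …, T.col k`. -/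
theorem col_eq_add_card (T : SkewSYT lam mu n) {k : ℕ} (hk1 : 1 ≤ k) (hkn : k ≤ n) :
    T.col k = mu (T.row k) + #{j ∈ Icc 1 k | T.row j = T.row k} := by
  have hcard : #{j ∈ Icc 1 k | T.row j = T.row k} = #(Ioc (mu (T.row k)) (T.col k)) := by
    refine card_nbij T.col (fun j hj => ?_) (fun j hj l hl hjl => ?_) (fun c hc => ?_)
    · simp only [coe_filter, mem_Icc, Set.mem_ofPred_eq] at hj
      obtain ⟨⟨hj1, hjk⟩, hrow⟩ := hj
      have hcol : T.col j ≤ T.col k := by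
        rcases hjk.lt_or_eq with hlt | rfl
        · exact (T.row_inc j k hj1 hlt hkn hrow).le
        · rfl
      simpa [hrow, hcol] using (T.mem_cell j hj1 (hjk.trans hkn)).1
    · simp only [coe_filter, mem_Icc, Set.mem_ofPred_eq] at hj hl
      exact T.inj' j l hj.1.1 (hj.1.2.trans hkn) hl.1.1 (hl.1.2.trans hkn)
        (hj.2.trans hl.2.symm) hjl
    · simp only [coe_Ioc, Set.mem_Ioc] at hc
      obtain ⟨j, hj1, hjn, hrow, rfl⟩ := T.surj' (T.row k) c (T.row_pos k hk1 hkn) hc.1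
        (hc.2.trans (T.mem_cell k hk1 hkn).2)
      refine ⟨j, ?_, rfl⟩
      have hjk : j ≤ k := by
        by_contra! hkj
        exact absurd (T.row_inc k j hk1 hkj hjn hrow.symm) (not_lt.2 hc.2)
      simp [hj1, hjk, hrow]
  rw [hcard, Nat.card_Ioc]
  have := (T.mem_cell k hk1 hkn).1
  omega

theorem ext_of_row {T U : SkewSYT lam mu n} (h : T.row = U.row) : T = U := by
  have hcol : T.col = U.col := funext fun k => by
    by_cases hk : 1 ≤ k ∧ k ≤ n
    · rw [T.col_eq_add_card hk.1 hk.2, U.col_eq_add_card hk.1 hk.2, h]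
    · rw [T.col_out k hk, U.col_out k hk]
  cases T; cases U; cases h; cases hcol; rfl

def legEntries (T : SkewSYT lam mu n) : Finset ℕ :=
  {k ∈ Icc 1 n | 2 ≤ T.row k}

end SkewSYT

theorem Finset.eq_Ico_of_pred_mem {S : Finset ℕ} {a : ℕ} (hS : ∀ k ∈ S, a ≤ k)
    (hpred : ∀ k ∈ S, a < k → k - 1 ∈ S) : S = Ico a (a + #S) := by
  have hdown : ∀ d, ∀ k ∈ S, d ≤ k - a → k - d ∈ S := by
    intro d
    induction d with
    | zero => simp +contextual
    | succ d ih =>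
      intro k hk hd
      have := hpred (k - d) (ih k hk (by omega)) (by have := hS k hk; omega)
      rwa [Nat.sub_sub] at this
  have hsub : S ⊆ Ico a (a + #S) := by
    intro k hk
    have hIcc : Icc a k ⊆ S := fun j hj => by
      rw [mem_Icc] at hj
      simpa [Nat.sub_sub_self hj.2] using hdown (k - j) k hk (by omega)
    have := card_le_card hIcc
    rw [Nat.card_Icc] at this
    rw [mem_Ico]
    have := hS k hk
    omega
  exact eq_of_subset_of_card_le hsub (by simp)

theorem Finset.eq_Icc_of_succ_mem {S : Finset ℕ} {b : ℕ} (hS : ∀ k ∈ S, k ≤ b)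
    (hsucc : ∀ k ∈ S, k < b → k + 1 ∈ S) : S = Icc (b + 1 - #S) b := by
  have hup : ∀ d, ∀ k ∈ S, d ≤ b - k → k + d ∈ S := by
    intro d
    induction d with
    | zero => simp +contextual
    | succ d ih =>
      intro k hk hd
      have := hsucc (k + d) (ih k hk (by omega)) (by have := hS k hk; omega)
      rwa [add_assoc] at this
  have hsub : S ⊆ Icc (b + 1 - #S) b := by
    intro k hk
    have hIcc : Icc k b ⊆ S := fun j hj => by
      rw [mem_Icc] at hj
      simpa [Nat.add_sub_cancel' hj.1] using hup (j - k) k hk (by omega)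
    have := card_le_card hIcc
    rw [Nat.card_Icc] at this
    rw [mem_Icc]
    have := hS k hk
    omega
  refine eq_of_subset_of_card_le hsub ?_
  rw [Nat.card_Icc]
  omega

theorem Nat.apply_eq_add_sub_of_lt_succ {f : ℕ → ℕ} {p q A : ℕ}
    (hf : ∀ k, p ≤ k → k < q → f k < f (k + 1)) (hp : A ≤ f p) (hq : f q ≤ A + (q - p))
    {k : ℕ} (hpk : p ≤ k) (hkq : k ≤ q) : f k = A + (k - p) := by
  have hgrow : ∀ i j, p ≤ i → i ≤ j → j ≤ q → f i + (j - i) ≤ f j := by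
    intro i j hi hij
    induction j, hij using Nat.le_induction with
    | base => simp
    | succ j hij ih =>
      intro hjq
      have := hf j (hi.trans hij) hjq
      have := ih (by omega)
      omega
  have := hgrow p k le_rfl hpk hkq
  have := hgrow k q hpk hkq le_rfl
  omega

structure IsHook (lam : ℕ → ℕ) (r : ℕ) : Prop where
  one_le_arm : 1 ≤ lam 1
  one_le_rows : 1 ≤ r
  leg : ∀ i, 2 ≤ i → lam i = if i ≤ r then 1 else 0

theorem IsHook.eq_one {lam : ℕ → ℕ} {r : ℕ} (h : IsHook lam r) {i : ℕ} (hi2 : 2 ≤ i)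
    (hir : i ≤ r) : lam i = 1 := by
  rw [h.leg i hi2, if_pos hir]

/-- Row and column of the entry `k` in the filling of a hook with `1, …, s` in the first row,
`s + 1, …, s + r - 1` down the first column, and the remaining entries in the first row. -/
def hookRow (n r s k : ℕ) : ℕ :=
  if 1 ≤ k ∧ k ≤ n then (if s < k ∧ k < s + r then k + 1 - s else 1) else 0

def hookCol (n r s k : ℕ) : ℕ :=
  if 1 ≤ k ∧ k ≤ n then (if k ≤ s then k else if k < s + r then 1 else k + 1 - r) else 0

def hookTableau {lam : ℕ → ℕ} {n r : ℕ} (h : IsHook lam r) (hn : n + 1 = lam 1 + r)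
    (s : ℕ) (hs1 : 1 ≤ s) (hs : s ≤ lam 1) : SkewSYT lam (fun _ => 0) n where
  row := hookRow n r s
  col := hookCol n r s
  row_pos k hk1 hkn := by
    simp only [hookRow, if_pos (And.intro hk1 hkn)]; split <;> omega
  mem_cell k hk1 hkn := by
    simp only [hookRow, hookCol, if_pos (And.intro hk1 hkn)]
    split_ifs <;> first | omega | rw [h.eq_one (by omega) (by omega)]; omega
  inj' k l hk1 hkn hl1 hln := by
    simp only [hookRow, hookCol, if_pos (And.intro hk1 hkn), if_pos (And.intro hl1 hln)]
    split_ifs <;> omega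
  surj' i c hi hc hci := by
    have := h.one_le_rows
    rcases hi.lt_or_eq with hi2 | rfl
    · have hlam := h.leg i hi2
      split_ifs at hlam with hir
      · refine ⟨s + i - 1, by omega, by omega, ?_, ?_⟩ <;>
          simp only [hookRow, hookCol] <;> split_ifs <;> omega
      · omega
    · by_cases hcs : c ≤ s
      · refine ⟨c, hc, by omega, ?_, ?_⟩ <;>
          simp only [hookRow, hookCol] <;> split_ifs <;> omega
      · refine ⟨c + r - 1, by omega, by omega, ?_, ?_⟩ <;>
          simp only [hookRow, hookCol] <;> split_ifs <;> omega
  row_inc k l hk1 hkl hln := by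
    simp only [hookRow, hookCol, if_pos (And.intro hk1 (hkl.le.trans hln)),
      if_pos (And.intro (hk1.trans hkl.le) hln)]
    split_ifs <;> omega
  col_inc k l hk1 hkl hln := by
    simp only [hookRow, hookCol, if_pos (And.intro hk1 (hkl.le.trans hln)),
      if_pos (And.intro (hk1.trans hkl.le) hln)]
    split_ifs <;> omega
  row_out k hk := if_neg hk
  col_out k hk := if_neg hk

namespace IsHook

variable {lam : ℕ → ℕ} {n r : ℕ}

theorem peakSet_hookTableau_one (h : IsHook lam r) (hn : n + 1 = lam 1 + r) :
    (hookTableau h hn 1 le_rfl h.one_le_arm).peakSet = ∅ :=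
  Set.eq_empty_iff_forall_notMem.2 fun i ⟨hi2, hin, hasc, hdes⟩ => by
    simp only [hookTableau, hookRow] at hasc hdes
    split_ifs at hasc hdes <;> omega

theorem valleySet_hookTableau_arm (h : IsHook lam r) (hn : n + 1 = lam 1 + r) :
    (hookTableau h hn (lam 1) h.one_le_arm le_rfl).valleySet = ∅ :=
  Set.eq_empty_iff_forall_notMem.2 fun i ⟨hi2, hin, hdes, hasc⟩ => by
    simp only [hookTableau, hookRow] at hasc hdes
    split_ifs at hasc hdes <;> omega

variable (T : SkewSYT lam (fun _ => 0) n)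

theorem col_eq_one (h : IsHook lam r) {k : ℕ} (hk1 : 1 ≤ k) (hkn : k ≤ n)
    (hrow : 2 ≤ T.row k) : T.col k = 1 := by
  have hcell := T.mem_cell k hk1 hkn
  have := h.leg _ hrow
  split_ifs at this <;> omega

theorem row_le (h : IsHook lam r) {k : ℕ} (hk1 : 1 ≤ k) (hkn : k ≤ n) : T.row k ≤ r := by
  have hcell := T.mem_cell k hk1 hkn
  by_contra! hr
  have := h.leg (T.row k) (by have := h.one_le_rows; omega)
  rw [if_neg hr.not_ge] at this
  omega

theorem row_one (h : IsHook lam r) (hn : n + 1 = lam 1 + r) : T.row 1 = 1 := by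
  have hn1 : 1 ≤ n := by have := h.one_le_rows; have := h.one_le_arm; omega
  obtain ⟨k, hk1, hkn, hrow, hcol⟩ := T.surj' 1 1 le_rfl Nat.zero_lt_one h.one_le_arm
  by_contra hne
  have hrow1 : 2 ≤ T.row 1 := by have := T.row_pos 1 le_rfl hn1; omega
  have hk : 1 < k := by
    rcases hk1.lt_or_eq with hk | rfl
    · exact hk
    · omega
  have := T.col_inc 1 k le_rfl hk hkn (by rw [h.col_eq_one T le_rfl hn1 hrow1, hcol])
  omega

theorem row_lt_row_succ_iff (h : IsHook lam r) {k : ℕ} (hk1 : 1 ≤ k) (hkn : k + 1 ≤ n) :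
    T.row k < T.row (k + 1) ↔ 2 ≤ T.row (k + 1) := by
  refine ⟨fun hlt => by have := T.row_pos k hk1 (by omega); omega, fun hrow => ?_⟩
  by_cases hk : 2 ≤ T.row k
  · exact T.col_inc k (k + 1) hk1 (by omega) hkn
      (by rw [h.col_eq_one T hk1 (by omega) hk, h.col_eq_one T (by omega) hkn hrow])
  · omega

theorem card_legEntries (h : IsHook lam r) : #T.legEntries = r - 1 := by
  rw [show r - 1 = #(Icc 2 r) by rw [Nat.card_Icc]; omega]
  refine card_nbij T.row (fun k hk => ?_) (fun k hk l hl hkl => ?_) (fun i hi => ?_)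
  · simp only [SkewSYT.legEntries, coe_filter, mem_Icc, Set.mem_ofPred_eq] at hk
    simpa [hk.2] using h.row_le T hk.1.1 hk.1.2
  · simp only [SkewSYT.legEntries, coe_filter, mem_Icc, Set.mem_ofPred_eq] at hk hl
    exact T.inj' k l hk.1.1 hk.1.2 hl.1.1 hl.1.2 hkl
      (by rw [h.col_eq_one T hk.1.1 hk.1.2 hk.2, h.col_eq_one T hl.1.1 hl.1.2 hl.2])
  · simp only [coe_Icc, Set.mem_Icc] at hi
    obtain ⟨k, hk1, hkn, hrow, -⟩ :=
      T.surj' i 1 (by omega) Nat.zero_lt_one (h.eq_one hi.1 hi.2).ge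
    exact ⟨k, by simp [SkewSYT.legEntries, hk1, hkn, hrow, hi.1], hrow⟩

theorem row_pred_lt_row_iff (h : IsHook lam r) {k : ℕ} (hk2 : 2 ≤ k) (hkn : k ≤ n) :
    T.row (k - 1) < T.row k ↔ 2 ≤ T.row k := by
  have := h.row_lt_row_succ_iff T (k := k - 1) (by omega) (by omega)
  rwa [Nat.sub_add_cancel (by omega : 1 ≤ k)] at this

theorem two_le_row_of_peakSet_eq_empty (h : IsHook lam r) (hT : T.peakSet = ∅) {i : ℕ}
    (hi2 : 2 ≤ i) (hin : i + 1 ≤ n) (hrow : 2 ≤ T.row (i + 1)) : 2 ≤ T.row i := by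
  by_contra hlow
  have hpeak : i ∈ T.peakSet :=
    ⟨hi2, hin, not_lt.1 (mt (h.row_pred_lt_row_iff T hi2 (by omega)).1 hlow),
      (h.row_lt_row_succ_iff T (by omega) hin).2 hrow⟩
  simp [hT] at hpeak

theorem two_le_row_succ_of_valleySet_eq_empty (h : IsHook lam r) (hT : T.valleySet = ∅)
    {i : ℕ} (hi2 : 2 ≤ i) (hin : i + 1 ≤ n) (hrow : 2 ≤ T.row i) : 2 ≤ T.row (i + 1) := by
  by_contra hlow
  have hvalley : i ∈ T.valleySet :=
    ⟨hi2, hin, (h.row_pred_lt_row_iff T hi2 (by omega)).2 hrow,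
      not_lt.1 (mt (h.row_lt_row_succ_iff T (by omega) hin).1 hlow)⟩
  simp [hT] at hvalley

theorem two_le_of_mem_legEntries (h : IsHook lam r) (hn : n + 1 = lam 1 + r) {k : ℕ}
    (hk : k ∈ T.legEntries) : 2 ≤ k := by
  simp only [SkewSYT.legEntries, mem_filter, mem_Icc] at hk
  rcases hk.1.1.lt_or_eq with hk1 | rfl
  · exact hk1
  · have := h.row_one T hn
    omega

theorem legEntries_eq_of_peakSet_eq_empty (h : IsHook lam r) (hn : n + 1 = lam 1 + r)
    (hT : T.peakSet = ∅) : T.legEntries = Ioo 1 (1 + r) := by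
  have hpred : ∀ k ∈ T.legEntries, 2 < k → k - 1 ∈ T.legEntries := fun k hk hk2 => by
    simp only [SkewSYT.legEntries, mem_filter, mem_Icc] at hk ⊢
    refine ⟨⟨by omega, by omega⟩,
      h.two_le_row_of_peakSet_eq_empty T hT (i := k - 1) (by omega) (by omega) ?_⟩
    rw [Nat.sub_add_cancel (by omega : 1 ≤ k)]
    exact hk.2
  rw [eq_Ico_of_pred_mem (fun k => h.two_le_of_mem_legEntries T hn) hpred, h.card_legEntries T]
  ext k
  simp only [mem_Ico, mem_Ioo]
  have := h.one_le_rows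
  omega

theorem legEntries_eq_of_valleySet_eq_empty (h : IsHook lam r) (hn : n + 1 = lam 1 + r)
    (hT : T.valleySet = ∅) : T.legEntries = Ioo (lam 1) (lam 1 + r) := by
  have hle : ∀ k ∈ T.legEntries, k ≤ n := fun k hk => by
    simp only [SkewSYT.legEntries, mem_filter, mem_Icc] at hk
    exact hk.1.2
  have hsucc : ∀ k ∈ T.legEntries, k < n → k + 1 ∈ T.legEntries := fun k hk hkn => by
    have hk2 := h.two_le_of_mem_legEntries T hn hk
    simp only [SkewSYT.legEntries, mem_filter, mem_Icc] at hk ⊢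
    exact ⟨⟨by omega, by omega⟩, h.two_le_row_succ_of_valleySet_eq_empty T hT hk2 hkn hk.2⟩
  rw [eq_Icc_of_succ_mem hle hsucc, h.card_legEntries T]
  ext k
  simp only [mem_Icc, mem_Ioo]
  have := h.one_le_rows
  omega

theorem eq_hookTableau (h : IsHook lam r) (hn : n + 1 = lam 1 + r) {s : ℕ} (hs1 : 1 ≤ s)
    (hs : s ≤ lam 1) (hT : T.legEntries = Ioo s (s + r)) : T = hookTableau h hn s hs1 hs := by
  have hleg : ∀ k, 1 ≤ k → k ≤ n → (2 ≤ T.row k ↔ s < k ∧ k < s + r) := by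
    intro k hk1 hkn
    have := congrArg (k ∈ ·) hT
    simpa [SkewSYT.legEntries, hk1, hkn] using this
  refine SkewSYT.ext_of_row (funext fun k => ?_)
  change T.row k = hookRow n r s k
  unfold hookRow
  split_ifs with hk hks
  · -- rows increase strictly along the leg, from at least `2` at `s + 1` to at most `r`
    have hrow := Nat.apply_eq_add_sub_of_lt_succ (f := T.row) (p := s + 1) (q := s + r - 1)
      (A := 2) (fun j hj hjq => (h.row_lt_row_succ_iff T (by omega) (by omega)).2
        ((hleg (j + 1) (by omega) (by omega)).2 (by omega)))
      ((hleg (s + 1) (by omega) (by omega)).2 (by omega))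
      ((h.row_le T (k := s + r - 1) (by omega) (by omega)).trans (by omega)) (k := k)
      (by omega) (by omega)
    omega
  · have := T.row_pos k hk.1 hk.2
    have := (hleg k hk.1 hk.2).not.2 hks
    omega
  · exact T.row_out k hk

theorem sum_Icc_eq {N : ℕ} (h : IsHook lam r) (hrN : r ≤ N) :
    ∑ i ∈ Icc 1 N, lam i = lam 1 + (r - 1) := by
  have hout : ∀ i ∈ Icc 1 N, i ∉ Icc 1 r → lam i = 0 := fun i hi hir => by
    simp only [mem_Icc] at hi hir
    have := h.one_le_rows
    rw [h.leg i (by omega), if_neg (by omega)]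
  rw [← sum_subset (Icc_subset_Icc_right hrN) hout, ← add_sum_Ioc_eq_sum_Icc h.one_le_rows,
    sum_congr rfl fun i hi => h.eq_one (mem_Ioc.1 hi).1 (mem_Ioc.1 hi).2]
  simp

end IsHook

theorem isHook_of_rank_one {lam : ℕ → ℕ} {n : ℕ}
    (hlam : ∀ i, 1 ≤ i → lam (i + 1) ≤ lam i)
    (h1 : 1 ≤ lam 1) (h2 : lam 2 ≤ 1)
    (hsize : ∃ N, (∀ i, N < i → lam i = 0) ∧ ∑ i ∈ Icc 1 N, lam i = n) :
    ∃ r, IsHook lam r ∧ n + 1 = lam 1 + r := by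
  obtain ⟨N, hN0, hNn⟩ := hsize
  have hanti : AntitoneOn lam {i | 1 ≤ i} := antitoneOn_nat_Ici_of_succ_le hlam
  have hN1 : 1 ≤ N := by by_contra; have := hN0 1 (by omega); omega
  set r := Nat.findGreatest (fun i => 1 ≤ lam i) N
  have hpos : ∀ i, 1 ≤ i → (1 ≤ lam i ↔ i ≤ r) := fun i hi => by
    refine ⟨fun hlami => ?_, fun hir => ?_⟩
    · have hiN : i ≤ N := by by_contra; have := hN0 i (by omega); omega
      exact Nat.le_findGreatest hiN hlami
    · have hr1 : 1 ≤ r := Nat.le_findGreatest hN1 h1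
      exact (Nat.findGreatest_spec (P := fun i => 1 ≤ lam i) hN1 h1).trans
        (hanti hi hr1 hir)
  have hhook : IsHook lam r := by
    refine ⟨h1, (hpos 1 le_rfl).1 h1, fun i hi => ?_⟩
    have := (hanti (show 1 ≤ 2 by omega) (show 1 ≤ i by omega) hi).trans h2
    have := hpos i (by omega)
    split_ifs <;> omega
  refine ⟨r, hhook, ?_⟩
  rw [← hNn, hhook.sum_Icc_eq (Nat.findGreatest_le N)]
  have := hhook.one_le_rows
  omega

/-- If the Young diagram `lam` of size `n` has rank `1` (i.e. `lam` is a nonempty hook: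
`lam 1 ≥ 1` and `lam 2 ≤ 1`), then there is exactly one standard Young tableau of shape
`lam` with empty peak set, and exactly one with empty valley set. -/
theorem stmt13 (lam : ℕ → ℕ) (n : ℕ)
    (hlam : ∀ i, 1 ≤ i → lam (i+1) ≤ lam i)
    (h1 : 1 ≤ lam 1) (h2 : lam 2 ≤ 1)
    (hsize : ∃ N, (∀ i, N < i → lam i = 0) ∧ (∑ i ∈ Finset.Icc 1 N, lam i) = n) :
    (∃! T : SkewSYT lam (fun _ => 0) n, T.peakSet = ∅) ∧
    (∃! T : SkewSYT lam (fun _ => 0) n, T.valleySet = ∅) := by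
  obtain ⟨r, h, hn⟩ := isHook_of_rank_one hlam h1 h2 hsize
  refine ⟨⟨hookTableau h hn 1 le_rfl h1, h.peakSet_hookTableau_one hn, fun T hT => ?_⟩,
    ⟨hookTableau h hn (lam 1) h1 le_rfl, h.valleySet_hookTableau_arm hn, fun T hT => ?_⟩⟩
  · exact h.eq_hookTableau T hn le_rfl h1 (h.legEntries_eq_of_peakSet_eq_empty T hn hT)
  · exact h.eq_hookTableau T hn h1 le_rfl (h.legEntries_eq_of_valleySet_eq_empty T hn hT)
end

section
/- If rank(λ) ≥ 2 then every Yamanouchi word y compatible with the straight shape λ has Peak(y) ≠ ∅ and Val(y) ≠ ∅; if rank(λ) = 1 then there is exactly one y ∈ Y(λ) with Val(y) = ∅ (namely y = 1 2 ⋯ k 1 1 ⋯ 1) and exactly one y ∈ Y(λ) with Peak(y) = ∅ (namely y = 1 1 ⋯ 1 2 3 ⋯ k). -/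
/-- The number of occurrences of the letter `i` among `y 1, …, y j`. -/
def cntY (y : ℕ → ℕ) (i j : ℕ) : ℕ := ((Finset.Icc 1 j).filter (fun t => y t = i)).card

/-- `y` is a Yamanouchi word compatible with the skew shape `lam/mu` (of size `n`),
normalized to `0` outside positions `1, …, n`: the letters are positive, the letter `i`
occurs `lam i - mu i` times, and every prefix `y^{(j)}` satisfies
`|y^{(j)}|_{i+1} + mu_{i+1} ≤ |y^{(j)}|_i + mu_i`. -/
def IsYamWord (lam mu : ℕ → ℕ) (n : ℕ) (y : ℕ → ℕ) : Prop :=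
  (∀ j, 1 ≤ j → j ≤ n → 1 ≤ y j) ∧
  (∀ j, ¬(1 ≤ j ∧ j ≤ n) → y j = 0) ∧
  (∀ i, 1 ≤ i → cntY y i n = lam i - mu i) ∧
  (∀ i j, 1 ≤ i → j ≤ n → cntY y (i+1) j + mu (i+1) ≤ cntY y i j + mu i)

/-- The peak set of a word: `y (i-1) < y i ≥ y (i+1)`. -/
def wordPeakSet (n : ℕ) (y : ℕ → ℕ) : Set ℕ :=
  {i | 2 ≤ i ∧ i + 1 ≤ n ∧ y (i-1) < y i ∧ y (i+1) ≤ y i}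

/-- The valley set of a word: `y (i-1) ≥ y i < y (i+1)`. -/
def wordValleySet (n : ℕ) (y : ℕ → ℕ) : Set ℕ :=
  {i | 2 ≤ i ∧ i + 1 ≤ n ∧ y i ≤ y (i-1) ∧ y i < y (i+1)}

/-!
A word without valleys rises strictly and then falls weakly; a word without peaks falls weakly
and then rises strictly. In a Yamanouchi word of straight shape a letter can exceed every
earlier letter by at most one, so a strictly rising run starting at `1` reads `1 2 3 ⋯`, and
a weakly falling run starting at `1` is constant. Hence a peak-free Yamanouchi word is
`1 ⋯ 1 2 3 ⋯`, which contains the letter `2` at most once, and in a valley-free one a `2` after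
the summit closes a prefix with two `2`s but a single `1`. Both are impossible when `λ₂ ≥ 2`.
For a hook, the same descriptions leave exactly one word of each kind.
-/

open Finset

section Counting

variable {y : ℕ → ℕ} {m j : ℕ}

lemma cntY_eq_card_of_forall_mem_iff {s : Finset ℕ}
    (h : ∀ t, (1 ≤ t ∧ t ≤ j ∧ y t = m) ↔ t ∈ s) : cntY y m j = s.card := by
  unfold cntY
  congr 1
  ext t
  rw [mem_filter, mem_Icc, ← h t, and_assoc]

lemma cntY_eq_zero (h : ∀ t, 1 ≤ t → t ≤ j → y t ≠ m) : cntY y m j = 0 :=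
  card_eq_zero.2 <| filter_eq_empty_iff.2 fun t ht => h t (mem_Icc.1 ht).1 (mem_Icc.1 ht).2

lemma one_le_cntY {t : ℕ} (h1 : 1 ≤ t) (h2 : t ≤ j) (ht : y t = m) : 1 ≤ cntY y m j :=
  card_pos.2 ⟨t, mem_filter.2 ⟨mem_Icc.2 ⟨h1, h2⟩, ht⟩⟩

lemma two_le_cntY {s t : ℕ} (h1 : 1 ≤ s) (hst : s < t) (h2 : t ≤ j) (hs : y s = m)
    (ht : y t = m) : 2 ≤ cntY y m j :=
  one_lt_card.2 ⟨s, mem_filter.2 ⟨mem_Icc.2 ⟨h1, by omega⟩, hs⟩,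
    t, mem_filter.2 ⟨mem_Icc.2 ⟨by omega, h2⟩, ht⟩, hst.ne⟩

lemma cntY_le_one {t₀ : ℕ} (h : ∀ t, 1 ≤ t → t ≤ j → y t = m → t = t₀) : cntY y m j ≤ 1 :=
  card_le_one.2 fun a ha b hb => by
    simp only [mem_filter, mem_Icc] at ha hb
    rw [h a ha.1.1 ha.1.2 ha.2, h b hb.1.1 hb.1.2 hb.2]

end Counting

/-- `R i` is a property of the step `i → i + 1` of a word of length `n`. -/
lemma exists_split_of_propagates {n : ℕ} (hn : 1 ≤ n) (R : ℕ → Prop)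
    (hR : ∀ i, 1 ≤ i → i + 2 ≤ n → R i → R (i + 1)) :
    ∃ p, 1 ≤ p ∧ p ≤ n ∧ (∀ i, 1 ≤ i → i < p → ¬R i) ∧ ∀ i, p ≤ i → i < n → R i := by
  classical
  have hex : ∃ p, 1 ≤ p ∧ (p = n ∨ R p) := ⟨n, hn, Or.inl rfl⟩
  refine ⟨Nat.find hex, (Nat.find_spec hex).1, Nat.find_min' hex ⟨hn, Or.inl rfl⟩,
    fun i hi hip hRi => Nat.find_min hex hip ⟨hi, Or.inr hRi⟩, fun i hpi => ?_⟩
  induction i, hpi using Nat.le_induction with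
  | base => exact fun hin => (Nat.find_spec hex).2.resolve_left hin.ne
  | succ i hpi ih =>
    exact fun hin => hR i ((Nat.find_spec hex).1.trans hpi) hin (ih (by omega))

section Unimodal

variable {n : ℕ} {y : ℕ → ℕ}

lemma exists_strictMonoOn_antitoneOn_of_wordValleySet_eq_empty (hn : 1 ≤ n)
    (h : wordValleySet n y = ∅) :
    ∃ p, 1 ≤ p ∧ p ≤ n ∧ StrictMonoOn y (Set.Icc 1 p) ∧ AntitoneOn y (Set.Icc p n) := by
  have hR : ∀ i, 1 ≤ i → i + 2 ≤ n → y (i + 1) ≤ y i → y (i + 2) ≤ y (i + 1) := by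
    intro i hi hin hle
    by_contra! hlt
    have hval : i + 1 ∈ wordValleySet n y := ⟨by omega, hin, hle, hlt⟩
    simp [h] at hval
  obtain ⟨p, hp1, hpn, hasc, hdesc⟩ := exists_split_of_propagates hn _ hR
  refine ⟨p, hp1, hpn, strictMonoOn_of_lt_add_one Set.ordConnected_Icc ?_,
    antitoneOn_of_add_one_le Set.ordConnected_Icc ?_⟩
  · exact fun a _ ha ha1 => not_le.1 (hasc a ha.1 (by have := ha1.2; omega))
  · exact fun a _ ha ha1 => hdesc a ha.1 (by have := ha1.2; omega)

lemma exists_antitoneOn_strictMonoOn_of_wordPeakSet_eq_empty (hn : 1 ≤ n)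
    (h : wordPeakSet n y = ∅) :
    ∃ p, 1 ≤ p ∧ p ≤ n ∧ AntitoneOn y (Set.Icc 1 p) ∧ StrictMonoOn y (Set.Icc p n) := by
  have hR : ∀ i, 1 ≤ i → i + 2 ≤ n → y i < y (i + 1) → y (i + 1) < y (i + 2) := by
    intro i hi hin hlt
    by_contra! hle
    have hpeak : i + 1 ∈ wordPeakSet n y := ⟨by omega, hin, hlt, hle⟩
    simp [h] at hpeak
  obtain ⟨p, hp1, hpn, hdesc, hasc⟩ := exists_split_of_propagates hn _ hR
  refine ⟨p, hp1, hpn, antitoneOn_of_add_one_le Set.ordConnected_Icc ?_,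
    strictMonoOn_of_lt_add_one Set.ordConnected_Icc ?_⟩
  · exact fun a _ ha ha1 => not_lt.1 (hdesc a ha.1 (by have := ha1.2; omega))
  · exact fun a _ ha ha1 => hasc a ha.1 (by have := ha1.2; omega)

end Unimodal

-- The Yamanouchi words of the standard tableaux of a hook filled row first and column first.

def rowFirstWord (n L : ℕ) : ℕ → ℕ :=
  fun j => if 1 ≤ j ∧ j ≤ n then (if j ≤ L then 1 else j - L + 1) else 0

def columnFirstWord (n k : ℕ) : ℕ → ℕ :=
  fun j => if 1 ≤ j ∧ j ≤ n then (if j ≤ k then j else 1) else 0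

section HookWords

variable {n j : ℕ}

lemma cntY_rowFirstWord_one (L : ℕ) (hj : j ≤ n) : cntY (rowFirstWord n L) 1 j = min j L := by
  rw [cntY_eq_card_of_forall_mem_iff (s := Icc 1 (min j L)), Nat.card_Icc, Nat.add_sub_cancel]
  intro t
  simp only [mem_Icc, rowFirstWord]
  split_ifs <;> omega

lemma cntY_rowFirstWord_of_two_le (L : ℕ) {m : ℕ} (hm : 2 ≤ m) (hj : j ≤ n) :
    cntY (rowFirstWord n L) m j = if L + m - 1 ≤ j then 1 else 0 := by
  split_ifs with h
  · rw [cntY_eq_card_of_forall_mem_iff (s := {L + m - 1}), card_singleton]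
    intro t
    simp only [mem_singleton, rowFirstWord]
    split_ifs <;> omega
  · refine cntY_eq_zero fun t _ _ => ?_
    simp only [rowFirstWord]
    split_ifs <;> omega

lemma cntY_columnFirstWord_one {k : ℕ} (hk : 1 ≤ k) (hj : j ≤ n) :
    cntY (columnFirstWord n k) 1 j = min j 1 + (j - k) := by
  rw [cntY_eq_card_of_forall_mem_iff (s := Icc 1 (min j 1) ∪ Ioc k j),
    card_union_of_disjoint (disjoint_left.2 fun t h1 h2 => by
      simp only [mem_Icc, mem_Ioc] at h1 h2
      omega),
    Nat.card_Icc, Nat.card_Ioc, Nat.add_sub_cancel]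
  intro t
  simp only [mem_union, mem_Icc, mem_Ioc, columnFirstWord]
  split_ifs <;> omega

lemma cntY_columnFirstWord_of_two_le (k : ℕ) {m : ℕ} (hm : 2 ≤ m) (hj : j ≤ n) :
    cntY (columnFirstWord n k) m j = if m ≤ j ∧ m ≤ k then 1 else 0 := by
  split_ifs with h
  · rw [cntY_eq_card_of_forall_mem_iff (s := {m}), card_singleton]
    intro t
    simp only [mem_singleton, columnFirstWord]
    split_ifs <;> omega
  · refine cntY_eq_zero fun t _ _ => ?_
    simp only [columnFirstWord]
    split_ifs <;> omega

lemma wordPeakSet_rowFirstWord (n L : ℕ) : wordPeakSet n (rowFirstWord n L) = ∅ :=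
  Set.eq_empty_of_forall_notMem fun i ⟨_, _, hlt, hle⟩ => by
    simp only [rowFirstWord] at hlt hle
    split_ifs at hlt hle <;> omega

lemma wordValleySet_columnFirstWord (n k : ℕ) : wordValleySet n (columnFirstWord n k) = ∅ :=
  Set.eq_empty_of_forall_notMem fun i ⟨_, _, hle, hlt⟩ => by
    simp only [columnFirstWord] at hle hlt
    split_ifs at hle hlt <;> omega

end HookWords

namespace IsYamWord

variable {lam : ℕ → ℕ} {n : ℕ} {y : ℕ → ℕ}

lemma cntY_eq (hY : IsYamWord lam (fun _ => 0) n y) {i : ℕ} (hi : 1 ≤ i) :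
    cntY y i n = lam i := by
  simpa using hY.2.2.1 i hi

lemma cntY_succ_le (hY : IsYamWord lam (fun _ => 0) n y) {i j : ℕ} (hi : 1 ≤ i) (hj : j ≤ n) :
    cntY y (i + 1) j ≤ cntY y i j := by
  simpa using hY.2.2.2 i j hi hj

lemma one_le_length (hY : IsYamWord lam (fun _ => 0) n y) {i : ℕ} (hi : 1 ≤ i)
    (hlam : 1 ≤ lam i) : 1 ≤ n := by
  by_contra! hn
  have := hY.cntY_eq hi
  rw [cntY_eq_zero fun t ht1 htn => by omega] at this
  omega

/-- The letter `y t - 1` has to occur before position `t`. -/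
lemma le_add_one_of_forall_lt_le (hY : IsYamWord lam (fun _ => 0) n y) {t m : ℕ} (ht1 : 1 ≤ t)
    (htn : t ≤ n) (h : ∀ s, 1 ≤ s → s < t → y s ≤ m) : y t ≤ m + 1 := by
  by_contra! hlt
  have hnone : cntY y (y t - 1) t = 0 := cntY_eq_zero fun s hs1 hst => by
    rcases hst.lt_or_eq with hst | rfl
    · have := h s hs1 hst
      omega
    · omega
  have hsome : 1 ≤ cntY y (y t - 1 + 1) t := one_le_cntY ht1 le_rfl (by omega)
  have := hY.cntY_succ_le (i := y t - 1) (by omega) htn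
  omega

lemma apply_one (hY : IsYamWord lam (fun _ => 0) n y) (hn : 1 ≤ n) : y 1 = 1 := by
  have := hY.le_add_one_of_forall_lt_le (m := 0) le_rfl hn fun s hs1 hs => by omega
  have := hY.1 1 le_rfl hn
  omega

lemma apply_eq_add_of_strictMonoOn (hY : IsYamWord lam (fun _ => 0) n y) {p q : ℕ} (hq : q ≤ n)
    (hmax : ∀ s, 1 ≤ s → s ≤ p → y s ≤ y p) (hmono : StrictMonoOn y (Set.Icc p q)) :
    ∀ t, p ≤ t → t ≤ q → y t = y p + (t - p) := by
  intro t hpt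
  induction t, hpt using Nat.le_induction with
  | base => simp
  | succ t hpt ih =>
    intro htq
    have hyt := ih (by omega)
    have hlt : y t < y (t + 1) := hmono ⟨hpt, by omega⟩ ⟨by omega, htq⟩ (by omega)
    have hle : y (t + 1) ≤ y t + 1 :=
      hY.le_add_one_of_forall_lt_le (by omega) (by omega) fun s hs1 hst => by
        rcases le_or_gt s p with hsp | hps
        · exact (hmax s hs1 hsp).trans
            (hmono.monotoneOn ⟨le_rfl, by omega⟩ ⟨hpt, by omega⟩ hpt)
        · exact hmono.monotoneOn ⟨hps.le, by omega⟩ ⟨hpt, by omega⟩ (by omega)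
    omega

lemma exists_apply_eq_self_antitoneOn_of_wordValleySet_eq_empty
    (hY : IsYamWord lam (fun _ => 0) n y) (hn : 1 ≤ n) (h : wordValleySet n y = ∅) :
    ∃ p, 1 ≤ p ∧ p ≤ n ∧ (∀ t, 1 ≤ t → t ≤ p → y t = t) ∧ AntitoneOn y (Set.Icc p n) := by
  obtain ⟨p, hp1, hpn, hasc, hdesc⟩ :=
    exists_strictMonoOn_antitoneOn_of_wordValleySet_eq_empty hn h
  refine ⟨p, hp1, hpn, fun t ht1 htp => ?_, hdesc⟩
  have := hY.apply_eq_add_of_strictMonoOn hpn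
    (fun s hs1 hs => by rw [show s = 1 by omega]) hasc t ht1 htp
  rw [hY.apply_one hn] at this
  omega

lemma eq_rowFirstWord_of_wordPeakSet_eq_empty (hY : IsYamWord lam (fun _ => 0) n y)
    (hn : 1 ≤ n) (h : wordPeakSet n y = ∅) : y = rowFirstWord n (lam 1) := by
  obtain ⟨p, hp1, hpn, hdesc, hasc⟩ := exists_antitoneOn_strictMonoOn_of_wordPeakSet_eq_empty hn h
  have hone : ∀ t, 1 ≤ t → t ≤ p → y t = 1 := fun t ht1 htp => by
    have := hdesc ⟨le_rfl, hp1⟩ ⟨ht1, htp⟩ ht1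
    have := hY.1 t ht1 (by omega)
    rw [hY.apply_one hn] at *
    omega
  have htail := hY.apply_eq_add_of_strictMonoOn le_rfl
    (fun s hs1 hsp => by rw [hone s hs1 hsp, hone p hp1 le_rfl]) hasc
  have hy : y = rowFirstWord n p := funext fun j => by
    unfold rowFirstWord
    split_ifs with hj hjp
    · exact hone j hj.1 hjp
    · rw [htail j (by omega) hj.2, hone p hp1 le_rfl]
      omega
    · exact hY.2.1 j hj
  have hL := hY.cntY_eq le_rfl
  rw [hy, cntY_rowFirstWord_one p le_rfl] at hL
  rwa [← hL, min_eq_right hpn]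

lemma wordPeakSet_ne_empty (hY : IsYamWord lam (fun _ => 0) n y) (h2 : 2 ≤ lam 2) :
    wordPeakSet n y ≠ ∅ := by
  intro h
  have hy := hY.eq_rowFirstWord_of_wordPeakSet_eq_empty (hY.one_le_length one_le_two (by omega)) h
  have := hY.cntY_eq one_le_two
  rw [hy, cntY_rowFirstWord_of_two_le _ le_rfl le_rfl] at this
  split_ifs at this <;> omega

lemma wordValleySet_ne_empty (hY : IsYamWord lam (fun _ => 0) n y) (h2 : 2 ≤ lam 2) :
    wordValleySet n y ≠ ∅ := by
  intro h
  obtain ⟨p, hp1, hpn, hid, hdesc⟩ := hY.exists_apply_eq_self_antitoneOn_of_wordValleySet_eq_empty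
    (hY.one_le_length one_le_two (by omega)) h
  have hc2 := hY.cntY_eq one_le_two
  obtain ⟨j, hpj, hjn, hyj⟩ : ∃ j, p < j ∧ j ≤ n ∧ y j = 2 := by
    by_contra! hno
    have : cntY y 2 n ≤ 1 := cntY_le_one (t₀ := 2) fun u hu1 hun hyu => by
      rcases le_or_gt u p with hup | hpu
      · rw [← hid u hu1 hup, hyu]
      · exact absurd hyu (hno u hpu hun)
    omega
  have hge : ∀ u, p ≤ u → u ≤ j → 2 ≤ y u := fun u hpu huj =>
    hyj ▸ hdesc ⟨hpu, by omega⟩ ⟨by omega, hjn⟩ huj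
  have hp2 : 2 ≤ p := hid p hp1 le_rfl ▸ hge p le_rfl hpj.le
  have h2j : 2 ≤ cntY y 2 j :=
    two_le_cntY one_le_two (by omega) le_rfl (hid 2 one_le_two hp2) hyj
  have h1j : cntY y 1 j ≤ 1 := cntY_le_one (t₀ := 1) fun u hu1 huj hyu => by
    rcases le_or_gt u p with hup | hpu
    · rw [← hid u hu1 hup, hyu]
    · have := hge u hpu.le huj
      omega
  have : cntY y 2 j ≤ cntY y 1 j := hY.cntY_succ_le le_rfl hjn
  omega

end IsYamWord

section Hook

variable {lam : ℕ → ℕ} {n k : ℕ}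

lemma eq_ite_of_apply_two_le_one (hlam : ∀ i, 1 ≤ i → lam (i + 1) ≤ lam i)
    (hparts : ∀ i, 1 ≤ i → i ≤ k → 1 ≤ lam i) (hzero : ∀ i, k < i → lam i = 0)
    (h1 : lam 2 ≤ 1) : ∀ i, 2 ≤ i → lam i = if i ≤ k then 1 else 0 := by
  intro i hi
  have hle : lam i ≤ lam 2 := by
    induction i, hi using Nat.le_induction with
    | base => exact le_rfl
    | succ i hi ih => exact (hlam i (by omega)).trans ih
  split_ifs with hik
  · have := hparts i (by omega) hik
    omega
  · exact hzero i (by omega)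

lemma sum_Icc_eq_of_hook (hhook : ∀ i, 2 ≤ i → lam i = if i ≤ k then 1 else 0) (hk : 1 ≤ k) :
    ∑ i ∈ Icc 1 k, lam i = lam 1 + (k - 1) := by
  have hone : ∀ i ∈ Ioc 1 k, lam i = 1 := fun i hi => by
    rw [mem_Ioc] at hi
    rw [hhook i hi.1, if_pos hi.2]
  rw [← add_sum_Ioc_eq_sum_Icc hk, sum_congr rfl hone, sum_const, Nat.card_Ioc, smul_eq_mul,
    mul_one]

lemma isYamWord_columnFirstWord (hhook : ∀ i, 2 ≤ i → lam i = if i ≤ k then 1 else 0)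
    (hk : 1 ≤ k) (hL : 1 ≤ lam 1) (hsize : lam 1 + k = n + 1) :
    IsYamWord lam (fun _ => 0) n (columnFirstWord n k) := by
  refine ⟨fun j hj1 hjn => ?_, fun j hj => if_neg hj, fun i hi => ?_, fun i j hi hj => ?_⟩
  · simp only [columnFirstWord, if_pos (And.intro hj1 hjn)]
    split_ifs <;> omega
  · rw [Nat.sub_zero]
    rcases hi.eq_or_lt with rfl | hi
    · rw [cntY_columnFirstWord_one hk le_rfl]
      omega
    · rw [cntY_columnFirstWord_of_two_le k hi le_rfl, hhook i hi]
      split_ifs <;> omega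
  · rw [add_zero, add_zero, cntY_columnFirstWord_of_two_le k (by omega) hj]
    rcases hi.eq_or_lt with rfl | hi
    · rw [cntY_columnFirstWord_one hk hj]
      split_ifs <;> omega
    · rw [cntY_columnFirstWord_of_two_le k hi hj]
      split_ifs <;> omega

lemma isYamWord_rowFirstWord (hhook : ∀ i, 2 ≤ i → lam i = if i ≤ k then 1 else 0)
    (hk : 1 ≤ k) (hL : 1 ≤ lam 1) (hsize : lam 1 + k = n + 1) :
    IsYamWord lam (fun _ => 0) n (rowFirstWord n (lam 1)) := by
  refine ⟨fun j hj1 hjn => ?_, fun j hj => if_neg hj, fun i hi => ?_, fun i j hi hj => ?_⟩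
  · simp only [rowFirstWord, if_pos (And.intro hj1 hjn)]
    split_ifs <;> omega
  · rw [Nat.sub_zero]
    rcases hi.eq_or_lt with rfl | hi
    · rw [cntY_rowFirstWord_one _ le_rfl]
      omega
    · rw [cntY_rowFirstWord_of_two_le _ hi le_rfl, hhook i hi]
      split_ifs <;> omega
  · rw [add_zero, add_zero, cntY_rowFirstWord_of_two_le _ (by omega) hj]
    rcases hi.eq_or_lt with rfl | hi
    · rw [cntY_rowFirstWord_one _ hj]
      split_ifs <;> omega
    · rw [cntY_rowFirstWord_of_two_le _ hi hj]
      split_ifs <;> omega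

lemma IsYamWord.eq_columnFirstWord_of_wordValleySet_eq_empty
    (hhook : ∀ i, 2 ≤ i → lam i = if i ≤ k then 1 else 0) {y : ℕ → ℕ}
    (hY : IsYamWord lam (fun _ => 0) n y) (hk : 1 ≤ k) (hn : 1 ≤ n) (h : wordValleySet n y = ∅) : y = columnFirstWord n k := by
  obtain ⟨p, hp1, hpn, hid, hdesc⟩ :=
    hY.exists_apply_eq_self_antitoneOn_of_wordValleySet_eq_empty hn h
  have htail : ∀ t, p < t → t ≤ n → y t = 1 := by
    intro t hpt htn
    have hle : y t ≤ p := hid p hp1 le_rfl ▸ hdesc ⟨le_rfl, hpn⟩ ⟨hpt.le, htn⟩ hpt.le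
    have hpos := hY.1 t (by omega) htn
    by_contra hne
    -- the letter `y t ≥ 2` also stands at position `y t ≤ p`, but occurs at most once in a hook
    have htwice := two_le_cntY (by omega) (show y t < t by omega) htn (hid (y t) hpos hle) rfl
    rw [hY.cntY_eq hpos, hhook (y t) (by omega)] at htwice
    split_ifs at htwice <;> omega
  have hy : y = columnFirstWord n p := funext fun j => by
    unfold columnFirstWord
    split_ifs with hj hjp
    · exact hid j hj.1 hjp
    · exact htail j (by omega) hj.2
    · exact hY.2.1 j hj
  have hpk : ∀ m, 2 ≤ m → (m ≤ p ↔ m ≤ k) := fun m hm => by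
    have := hY.cntY_eq (i := m) (by omega)
    rw [hy, cntY_columnFirstWord_of_two_le p hm le_rfl, hhook m hm] at this
    split_ifs at this <;> omega
  suffices p = k by rw [hy, this]
  by_contra hne
  have := hpk (max p k) (by omega)
  omega

end Hook

/-- Let `lam` be a partition with exactly `k` (positive) parts and size `n`.  If
`rank lam ≥ 2` (i.e. `lam 2 ≥ 2`) then every Yamanouchi word compatible with `lam` has a
peak and a valley; if `rank lam = 1` (i.e. `lam 2 ≤ 1`, a hook) then the word
`1 2 ⋯ k 1 1 ⋯ 1` is the unique Yamanouchi word compatible with `lam` without valleys,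
and `1 1 ⋯ 1 2 3 ⋯ k` is the unique one without peaks. -/
theorem stmt19 (lam : ℕ → ℕ) (n k : ℕ) (hk : 1 ≤ k)
    (hlam : ∀ i, 1 ≤ i → lam (i+1) ≤ lam i)
    (hparts : ∀ i, 1 ≤ i → i ≤ k → 1 ≤ lam i)
    (hzero : ∀ i, k < i → lam i = 0)
    (hn : n = ∑ i ∈ Finset.Icc 1 k, lam i) :
    (2 ≤ lam 2 → ∀ y, IsYamWord lam (fun _ => 0) n y →
        wordPeakSet n y ≠ ∅ ∧ wordValleySet n y ≠ ∅) ∧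
    (lam 2 ≤ 1 →
      (IsYamWord lam (fun _ => 0) n
          (fun j => if 1 ≤ j ∧ j ≤ n then (if j ≤ k then j else 1) else 0) ∧
        wordValleySet n
          (fun j => if 1 ≤ j ∧ j ≤ n then (if j ≤ k then j else 1) else 0) = ∅ ∧
        (∀ y, IsYamWord lam (fun _ => 0) n y → wordValleySet n y = ∅ →
          y = fun j => if 1 ≤ j ∧ j ≤ n then (if j ≤ k then j else 1) else 0)) ∧
      (IsYamWord lam (fun _ => 0) n
          (fun j => if 1 ≤ j ∧ j ≤ n then (if j ≤ lam 1 then 1 else j - lam 1 + 1) else 0) ∧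
        wordPeakSet n
          (fun j => if 1 ≤ j ∧ j ≤ n then (if j ≤ lam 1 then 1 else j - lam 1 + 1) else 0) = ∅ ∧
        (∀ y, IsYamWord lam (fun _ => 0) n y → wordPeakSet n y = ∅ →
          y = fun j => if 1 ≤ j ∧ j ≤ n then (if j ≤ lam 1 then 1 else j - lam 1 + 1) else 0))) := by
  refine ⟨fun h2 y hY => ⟨hY.wordPeakSet_ne_empty h2, hY.wordValleySet_ne_empty h2⟩, fun h1 => ?_⟩
  have hhook := eq_ite_of_apply_two_le_one hlam hparts hzero h1
  have hL : 1 ≤ lam 1 := hparts 1 le_rfl hk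
  have hsize : lam 1 + k = n + 1 := by
    rw [hn, sum_Icc_eq_of_hook hhook hk]
    omega
  exact ⟨⟨isYamWord_columnFirstWord hhook hk hL hsize, wordValleySet_columnFirstWord n k,
      fun y hY h => hY.eq_columnFirstWord_of_wordValleySet_eq_empty hhook hk (by omega) h⟩,
    ⟨isYamWord_rowFirstWord hhook hk hL hsize, wordPeakSet_rowFirstWord n (lam 1),
      fun y hY h => hY.eq_rowFirstWord_of_wordPeakSet_eq_empty (by omega) h⟩⟩
end
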